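/- arXiv:2408.14938 — 2 statements merged into one kernel-verified Lean document; each statement's English description precedes it below -/
import Mathlib

section
/- If a pure braid diagram B (i.e., the induced permutation of strands is the identity) has warping degree zero, then B is equivalent to the trivial braid. -/
namespace Weaving

/-- A braid letter: 0-based generator index `k` (representing `σ_{k+1}`) and a sign
(`true` = positive crossing). -/
abbrev Letter := ℕ × Bool

/-- A braid diagram (word). Letters are read from top to bottom. -/
abbrev Word := List Letter

/-- Wellformedness of a word as a braid on `p` strands. -/
def WF (p : ℕ) (w : Word) : Prop := ∀ l ∈ w, l.1 + 2 ≤ p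

/-- One round `σ_1 σ_2^{-1} σ_3 ⋯ σ_{p-1}^{(-1)^p}` of the weaving braid on `p` strands. -/
def wRound (p : ℕ) : Word := (List.range (p - 1)).map fun k => (k, decide (k % 2 = 0))

/-- The weaving braid word `B_W(p,q) = (σ_1 σ_2^{-1} ⋯ σ_{p-1}^{(-1)^p})^q`. -/
def wWord (p q : ℕ) : Word := (List.replicate q (wRound p)).flatten

/-- The transposition of strand positions effected by one letter. -/
def letterPerm (l : Letter) : Equiv.Perm ℕ := Equiv.swap l.1 (l.1 + 1)

/-- The permutation of a braid word: sends the top position of a strand to its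
bottom position. -/
def permOfWord (w : Word) : Equiv.Perm ℕ := ((w.map letterPerm).reverse).prod

/-- The position permutation just before the `n`-th crossing (0-based). -/
def permUpTo (w : Word) (n : ℕ) : Equiv.Perm ℕ := permOfWord (w.take n)

/-- The label (top position) of the strand passing over at crossing `n`.
(Convention: at a positive letter `σ_k`, the strand at position `k` passes over.) -/
def overLabel (w : Word) (n : ℕ) : ℕ :=
  let l := w.getD n (0, true)
  (permUpTo w n)⁻¹ (if l.2 then l.1 else l.1 + 1)

/-- The label of the strand passing under at crossing `n`. -/
def underLabel (w : Word) (n : ℕ) : ℕ :=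
  let l := w.getD n (0, true)
  (permUpTo w n)⁻¹ (if l.2 then l.1 + 1 else l.1)

/-- The number of warping crossing points of the braid diagram `w` with respect to a
priority (ordering of base points) `r` on the strand labels: a crossing is warping
if the strand whose base point comes earlier passes under. -/
def warpCount (w : Word) (r : ℕ → ℕ) : ℕ :=
  ((List.range w.length).filter fun n =>
    decide (r (underLabel w n) < r (overLabel w n))).length

/-- The warping degree of a braid diagram: the minimum of `warpCount` over all
orderings of the base points at the tops of the strands. -/
noncomputable def warpingDegree (w : Word) : ℕ :=
  sInf { m | ∃ r : ℕ → ℕ, Function.Injective r ∧ warpCount w r = m }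

/-- A sequence of base points (a list enumerating the strands `0,…,p-1`) follows the
closure if, whenever the closure-successor of the current strand has not yet appeared,
it is the next base point. -/
def FollowsClosure (p : ℕ) (w : Word) (bs : List ℕ) : Prop :=
  bs.Perm (List.range p) ∧ ∀ m, m + 1 < bs.length →
    permOfWord w (bs.getD m 0) ∉ bs.take (m + 1) →
    bs.getD (m + 1) 0 = permOfWord w (bs.getD m 0)

/-- The closed warping degree of a braid diagram. -/
noncomputable def closedWarpingDegree (p : ℕ) (w : Word) : ℕ :=
  sInf { m | ∃ bs : List ℕ, FollowsClosure p w bs ∧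
    warpCount w (fun a => List.idxOf a bs) = m }

/-- The strands of the closure component of strand `i`, in traversal order. -/
def strandCycle (w : Word) (p i : ℕ) : List ℕ :=
  ((List.range p).map fun t => ((permOfWord w)^[t]) i).dedup

/-- The crossings met by strand `i` from top to bottom, with a flag recording whether
the strand passes under there. -/
def strandPassages (w : Word) (i : ℕ) : List (ℕ × Bool) :=
  ((List.range w.length).filter fun n =>
    (overLabel w n == i) || (underLabel w n == i)).map
    fun n => (n, underLabel w n == i)

/-- All the crossing passages of the closure component of strand `i`, in the cyclic
order in which they are traversed starting from the top of strand `i`. -/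
def compPassages (w : Word) (p i : ℕ) : List (ℕ × Bool) :=
  (strandCycle w p i).flatMap (strandPassages w)

/-- `starts` contains exactly one strand representative on each closure component. -/
def ValidStarts (p : ℕ) (w : Word) (starts : List ℕ) : Prop :=
  ∀ i < p, ∃! s, s ∈ starts ∧ i ∈ strandCycle w p s

/-- The passage sequence of the whole closure diagram determined by a choice of
base points: component representatives `starts` and rotations `ts` (positions of the
base points along the components). -/
def fullTraversal (w : Word) (p : ℕ) (starts ts : List ℕ) : List (ℕ × Bool) :=
  ((starts.zip ts).map fun st => (compPassages w p st.1).rotate st.2).flatten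

/-- Same, for the reversed orientation of the closure. -/
def fullTraversalRev (w : Word) (p : ℕ) (starts ts : List ℕ) : List (ℕ × Bool) :=
  ((starts.zip ts).map fun st => ((compPassages w p st.1).reverse).rotate st.2).flatten

/-- Crossing `n` is a warping crossing point of the traversal `T` if it is first met
as an under-crossing. -/
def warpInTraversal (T : List (ℕ × Bool)) (n : ℕ) : Bool :=
  ((T.filter fun x => x.1 == n).headD (0, false)).2

def traversalWarpCount (w : Word) (T : List (ℕ × Bool)) : ℕ :=
  ((List.range w.length).filter fun n => warpInTraversal T n).length

/-- The warping degree of the closure diagram of `w` (with the braid orientation):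
the minimum number of warping crossing points over all choices of base points. -/
noncomputable def closureWarpingDegree (p : ℕ) (w : Word) : ℕ :=
  sInf { m | ∃ starts ts : List ℕ, ValidStarts p w starts ∧ ts.length = starts.length ∧
    traversalWarpCount w (fullTraversal w p starts ts) = m }

/-- The warping degree of the closure diagram of `w` with reversed orientation. -/
noncomputable def closureWarpingDegreeRev (p : ℕ) (w : Word) : ℕ :=
  sInf { m | ∃ starts ts : List ℕ, ValidStarts p w starts ∧ ts.length = starts.length ∧
    traversalWarpCount w (fullTraversalRev w p starts ts) = m }

/-- Relations of the braid group on `p` strands (generators `0,…,p-2`). -/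
def braidRels (p : ℕ) : Set (FreeGroup (Fin (p - 1))) :=
  { r | (∃ i j : Fin (p - 1), (i : ℕ) + 1 = (j : ℕ) ∧
          r = FreeGroup.of i * FreeGroup.of j * FreeGroup.of i *
              (FreeGroup.of j * FreeGroup.of i * FreeGroup.of j)⁻¹) ∨
        (∃ i j : Fin (p - 1), (i : ℕ) + 2 ≤ (j : ℕ) ∧
          r = FreeGroup.of i * FreeGroup.of j * (FreeGroup.of j * FreeGroup.of i)⁻¹) }

/-- The braid group on `p` strands. -/
abbrev BraidGroup (p : ℕ) := PresentedGroup (braidRels p)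

def letterToBraid (p : ℕ) (l : Letter) : BraidGroup p :=
  if h : l.1 < p - 1 then
    (if l.2 then PresentedGroup.of ⟨l.1, h⟩ else (PresentedGroup.of ⟨l.1, h⟩)⁻¹)
  else 1

/-- The element of the braid group represented by a word. -/
def toBraid (p : ℕ) (w : Word) : BraidGroup p := (w.map (letterToBraid p)).prod

/-- Markov moves on closed braid diagrams: braid-group equality, conjugation
(cyclic permutation), and (de)stabilization. -/
inductive MarkovStep : ℕ × Word → ℕ × Word → Prop
  | braid (p : ℕ) (w w' : Word) : WF p w → WF p w' → toBraid p w = toBraid p w' →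
      MarkovStep (p, w) (p, w')
  | conj (p : ℕ) (w₁ w₂ : Word) : WF p (w₁ ++ w₂) → MarkovStep (p, w₁ ++ w₂) (p, w₂ ++ w₁)
  | stab (p : ℕ) (w : Word) (b : Bool) : WF p w → 1 ≤ p →
      MarkovStep (p, w) (p + 1, w ++ [(p - 1, b)])

/-- Two closed braid diagrams represent the same link iff they are Markov equivalent. -/
def MarkovEquiv : ℕ × Word → ℕ × Word → Prop := Relation.EqvGen MarkovStep

/-- The closure of `(p, w)` represents a trivial link (an unlink). -/
def IsTrivialClosure (p : ℕ) (w : Word) : Prop := ∃ r : ℕ, MarkovEquiv (p, w) (r, [])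

/-- The canonical representative (minimum label) of the closure component of strand `i`. -/
def orbitMin (w : Word) (p i : ℕ) : ℕ := (strandCycle w p i).foldr min i

/-- The number of components of the closure of `(p, w)`. -/
def numComponents (p : ℕ) (w : Word) : ℕ := ((Finset.range p).image (orbitMin w p)).card

/-- The closure of `(p, w)` is the unknot. -/
def IsUnknot (p : ℕ) (w : Word) : Prop := IsTrivialClosure p w ∧ numComponents p w = 1

/-- Apply crossing changes at the set `S` of crossing indices. -/
def flipAt (w : Word) (S : Finset ℕ) : Word :=
  w.zipIdx.map fun nl => if nl.2 ∈ S then (nl.1.1, !nl.1.2) else nl.1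

/-- `u(B)`: the minimum number of crossing changes on the braid diagram `w` making its
closure a trivial link. -/
noncomputable def braidUnknottingNumber (p : ℕ) (w : Word) : ℕ :=
  sInf { m | ∃ S : Finset ℕ, S ⊆ Finset.range w.length ∧ S.card = m ∧
    IsTrivialClosure p (flipAt w S) }

/-- The unknotting (unlinking) number of the link represented by the closure of
`(p, w)`: the minimum number of crossing changes over all diagrams of the link. -/
noncomputable def linkUnknottingNumber (p : ℕ) (w : Word) : ℕ :=
  sInf { m | ∃ p' w', MarkovEquiv (p, w) (p', w') ∧
    ∃ S : Finset ℕ, S ⊆ Finset.range w'.length ∧ S.card = m ∧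
      IsTrivialClosure p' (flipAt w' S) }

/-- The sign of crossing `n` (all strands oriented downwards). -/
def crossingSign (w : Word) (n : ℕ) : ℤ := if (w.getD n (0, true)).2 then 1 else -1

/-- The linking number of the closure components of strands `i` and `j` (assumed to lie
on distinct components): half the signed count of their mutual crossings. -/
def lk (w : Word) (i j : ℕ) : ℤ :=
  (∑ n ∈ Finset.range w.length,
    if (overLabel w n = i ∧ underLabel w n = j) ∨ (overLabel w n = j ∧ underLabel w n = i)
    then crossingSign w n else 0) / 2

/-- The linking number between the closure components represented by `a` and `b`. -/
def compLk (p : ℕ) (w : Word) (a b : ℕ) : ℤ :=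
  (∑ n ∈ Finset.range w.length,
    if (orbitMin w p (overLabel w n) = a ∧ orbitMin w p (underLabel w n) = b) ∨
       (orbitMin w p (overLabel w n) = b ∧ orbitMin w p (underLabel w n) = a)
    then crossingSign w n else 0) / 2

/-- A link is proper if the total linking number of each component with all the
others is even. -/
def IsProper (p : ℕ) (w : Word) : Prop :=
  ∀ a ∈ (Finset.range p).image (orbitMin w p),
    (2 : ℤ) ∣ ∑ b ∈ ((Finset.range p).image (orbitMin w p)).erase a, compLk p w a b

/-- The closure of `(p, w)` is a split link. -/
def IsSplit (p : ℕ) (w : Word) : Prop :=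
  ∃ p' w', MarkovEquiv (p, w) (p', w') ∧ WF p' w' ∧
    ∃ k, k + 1 < p' ∧ ∀ l ∈ w', l.1 ≠ k

/-- The connected sum diagram of the closures of a braid on `a` strands and a braid on
`b` strands, as a braid on `a + b - 1` strands sharing one strand. -/
def connSum (a : ℕ) (w₁ w₂ : Word) : Word := w₁ ++ w₂.map fun l => (l.1 + (a - 1), l.2)

/-- The closure of `(p, w)` is a prime link: it is not the unknot and in every
connected-sum decomposition one factor is the unknot. -/
def IsPrime (p : ℕ) (w : Word) : Prop :=
  ¬ IsUnknot p w ∧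
  ∀ a b : ℕ, ∀ w₁ w₂ : Word, 1 ≤ a → 1 ≤ b → WF a w₁ → WF b w₂ →
    MarkovEquiv (p, w) (a + b - 1, connSum a w₁ w₂) →
    IsUnknot a w₁ ∨ IsUnknot b w₂
lemma perm_inv_apply_self (f : Equiv.Perm ℕ) (x : ℕ) : f⁻¹ (f x) = x :=
  Equiv.symm_apply_apply f x

lemma perm_apply_inv_self (f : Equiv.Perm ℕ) (x : ℕ) : f (f⁻¹ x) = x :=
  Equiv.apply_symm_apply f x

section Aux

open Equiv List

variable {G : Type*} [Group G]

/-- evaluation of a letter in a group, given images of the generators -/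
def ev (f : ℕ → G) (l : Letter) : G := if l.2 then f l.1 else (f l.1)⁻¹

/-- evaluation of a word -/
def evalW (f : ℕ → G) (w : Word) : G := (w.map (ev f)).prod

@[simp] lemma evalW_nil (f : ℕ → G) : evalW f [] = 1 := rfl

@[simp] lemma evalW_cons (f : ℕ → G) (l : Letter) (w : Word) :
    evalW f (l :: w) = ev f l * evalW f w := by simp [evalW]

@[simp] lemma evalW_append (f : ℕ → G) (v w : Word) :
    evalW f (v ++ w) = evalW f v * evalW f w := by simp [evalW]

@[simp] lemma evalW_singleton (f : ℕ → G) (l : Letter) : evalW f [l] = ev f l := by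
  simp [evalW]

/-- the generator images for the braid group -/
def fB (p : ℕ) (i : ℕ) : BraidGroup p :=
  if h : i < p - 1 then PresentedGroup.of ⟨i, h⟩ else 1

lemma letterToBraid_eq (p : ℕ) (l : Letter) : letterToBraid p l = ev (fB p) l := by
  rcases l with ⟨k, s⟩
  cases s <;> simp only [letterToBraid, ev, fB] <;> split <;> simp

lemma toBraid_eq_evalW (p : ℕ) (w : Word) : toBraid p w = evalW (fB p) w := by
  unfold toBraid evalW
  congr 1
  exact List.map_congr_left fun l _ => letterToBraid_eq p l

@[simp] lemma permOfWord_nil : permOfWord [] = 1 := rfl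

lemma permOfWord_cons (l : Letter) (t : Word) :
    permOfWord (l :: t) = permOfWord t * letterPerm l := by
  simp [permOfWord]

lemma permOfWord_append (v w : Word) :
    permOfWord (v ++ w) = permOfWord w * permOfWord v := by
  simp [permOfWord]

@[simp] lemma permOfWord_singleton (l : Letter) : permOfWord [l] = letterPerm l := by
  simp [permOfWord]

/-- generator images in (Perm ℕ)ᵐᵒᵖ -/
def fP (i : ℕ) : (Equiv.Perm ℕ)ᵐᵒᵖ := MulOpposite.op (Equiv.swap i (i+1))

lemma evalW_fP (w : Word) : evalW fP w = MulOpposite.op (permOfWord w) := by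
  induction w with
  | nil => simp
  | cons l t ih =>
    have h1 : ev fP l = MulOpposite.op (letterPerm l) := by
      rcases l with ⟨k, s⟩
      cases s <;> simp [ev, fP, letterPerm, ← MulOpposite.op_inv]
    rw [evalW_cons, ih, h1, permOfWord_cons, MulOpposite.op_mul]

lemma swap_commute {k m : ℕ} (h1 : k ≠ m) (h2 : k + 1 ≠ m) (h3 : k ≠ m + 1) :
    Commute (Equiv.swap k (k+1)) (Equiv.swap m (m+1)) := by
  apply Equiv.Perm.Disjoint.commute
  intro x
  rcases eq_or_ne x m with rfl | hm
  · left; exact Equiv.swap_apply_of_ne_of_ne (Ne.symm h1) (Ne.symm (by omega))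
  · rcases eq_or_ne x (m+1) with rfl | hm1
    · left; exact Equiv.swap_apply_of_ne_of_ne (Ne.symm h3) (Ne.symm (by omega))
    · right; exact Equiv.swap_apply_of_ne_of_ne hm hm1

lemma swap_triple (m : ℕ) :
    Equiv.swap m (m+1) * Equiv.swap (m+1) (m+2) * Equiv.swap m (m+1)
      = Equiv.swap m (m+2) := by
  have := Equiv.swap_mul_swap_mul_swap (x := m+2) (y := m+1) (z := m)
    (by omega) (by omega)
  rw [Equiv.swap_comm (m+2) (m+1)] at this
  rw [Equiv.swap_comm (m+1) m] at this
  exact this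

lemma swap_triple' (m : ℕ) :
    Equiv.swap (m+1) (m+2) * Equiv.swap m (m+1) * Equiv.swap (m+1) (m+2)
      = Equiv.swap m (m+2) := by
  have := Equiv.swap_mul_swap_mul_swap (x := m) (y := m+1) (z := m+2)
    (by omega) (by omega)
  rw [Equiv.swap_comm (m+2) m] at this
  exact this

lemma swap_braid (m : ℕ) :
    Equiv.swap m (m+1) * Equiv.swap (m+1) (m+2) * Equiv.swap m (m+1)
      = Equiv.swap (m+1) (m+2) * Equiv.swap m (m+1) * Equiv.swap (m+1) (m+2) := by
  rw [swap_triple, swap_triple']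

lemma fB_braid (p i : ℕ) (h : i + 1 < p - 1) :
    fB p i * fB p (i+1) * fB p i = fB p (i+1) * fB p i * fB p (i+1) := by
  have hi : i < p - 1 := by omega
  have hrel : (FreeGroup.of (⟨i, hi⟩ : Fin (p-1)) * FreeGroup.of (⟨i+1, h⟩ : Fin (p-1)) *
      FreeGroup.of (⟨i, hi⟩ : Fin (p-1)) *
      (FreeGroup.of (⟨i+1, h⟩ : Fin (p-1)) * FreeGroup.of (⟨i, hi⟩ : Fin (p-1)) *
        FreeGroup.of (⟨i+1, h⟩ : Fin (p-1)))⁻¹) ∈ braidRels p :=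
    Or.inl ⟨⟨i, hi⟩, ⟨i+1, h⟩, rfl, rfl⟩
  have h1 : PresentedGroup.mk (braidRels p) _ = (1 : BraidGroup p) :=
    (QuotientGroup.eq_one_iff _).mpr (Subgroup.subset_normalClosure hrel)
  rw [map_mul, map_mul, map_mul, map_inv, map_mul, map_mul] at h1
  have h2 := mul_eq_one_iff_eq_inv.mp h1
  rw [inv_inv] at h2
  simp only [fB, hi, h, dif_pos]
  exact h2

lemma fB_commute (p : ℕ) {i j : ℕ} (h : i + 2 ≤ j) : Commute (fB p i) (fB p j) := by
  by_cases hj : j < p - 1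
  · have hi : i < p - 1 := by omega
    have hrel : (FreeGroup.of (⟨i, hi⟩ : Fin (p-1)) * FreeGroup.of (⟨j, hj⟩ : Fin (p-1)) *
        (FreeGroup.of (⟨j, hj⟩ : Fin (p-1)) * FreeGroup.of (⟨i, hi⟩ : Fin (p-1)))⁻¹) ∈
          braidRels p :=
      Or.inr ⟨⟨i, hi⟩, ⟨j, hj⟩, h, rfl⟩
    have h1 : PresentedGroup.mk (braidRels p) _ = (1 : BraidGroup p) :=
      (QuotientGroup.eq_one_iff _).mpr (Subgroup.subset_normalClosure hrel)
    rw [map_mul, map_inv, map_mul] at h1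
    have h2 := mul_eq_one_iff_eq_inv.mp h1
    rw [inv_inv] at h2
    simp only [fB, hi, hj, dif_pos]
    exact h2
  · simp only [fB]
    rw [dif_neg hj]
    exact Commute.one_right _

end Aux
section Surgery

open List

variable {G : Type*} [Group G]

/-- replacement block for conjugation by `σ_m` -/
def rep (m : ℕ) (l : Letter) : Word :=
  if l.1 = m + 1 then [(m+1, false), (m, l.2), (m+1, true)] else [l]

lemma conj_braid {a b : G} (h : b * a * b = a * b * a) (s : Bool) :
    b * (if s then a else a⁻¹) * b⁻¹ = a⁻¹ * (if s then b else b⁻¹) * a := by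
  have h1 : b * a * b⁻¹ = a⁻¹ * b * a := by
    calc b * a * b⁻¹ = a⁻¹ * (a * b * a) * b⁻¹ := by group
    _ = a⁻¹ * (b * a * b) * b⁻¹ := by rw [h]
    _ = a⁻¹ * b * a := by group
  cases s
  · simp only [if_neg (by simp : ¬ (false = true))]
    have h2 : b * a⁻¹ * b⁻¹ = (b * a * b⁻¹)⁻¹ := by group
    rw [h2, h1]; group
  · simpa using h1

lemma surgery_conj (f : ℕ → G) (m : ℕ) :
    ∀ (M : Word),
    (∀ l ∈ M, l.1 = m+1 → f m * f (m+1) * f m = f (m+1) * f m * f (m+1)) →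
    (∀ l ∈ M, l.1 ≠ m+1 → Commute (f l.1) (f m)) →
    f m * evalW f M * (f m)⁻¹ = evalW f (M.flatMap (rep m)) := by
  intro M
  induction M with
  | nil => intro _ _; simp
  | cons l T ih =>
    intro hb hc
    have hT := ih (fun x hx => hb x (mem_cons_of_mem _ hx))
      (fun x hx => hc x (mem_cons_of_mem _ hx))
    rw [List.flatMap_cons, evalW_append, ← hT, evalW_cons]
    have hsplit : f m * (ev f l * evalW f T) * (f m)⁻¹
        = (f m * ev f l * (f m)⁻¹) * (f m * evalW f T * (f m)⁻¹) := by group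
    rw [hsplit]
    congr 1
    by_cases hl : l.1 = m + 1
    · rw [rep, if_pos hl]
      have hbr := hb l (mem_cons_self) hl
      have hcb := conj_braid (a := f (m+1)) (b := f m) hbr l.2
      have hev : ev f l = if l.2 then f (m+1) else (f (m+1))⁻¹ := by
        rw [ev, hl]
      rw [hev]
      rw [evalW_cons, evalW_cons, evalW_singleton]
      show _ = ev f (m+1, false) * (ev f (m, l.2) * ev f (m+1, true))
      have e1 : ev f ((m+1 : ℕ), false) = (f (m+1))⁻¹ := rfl
      have e2 : ev f ((m : ℕ), l.2) = if l.2 then f m else (f m)⁻¹ := rfl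
      have e3 : ev f ((m+1 : ℕ), true) = f (m+1) := rfl
      rw [e1, e2, e3, ← mul_assoc]
      exact hcb
    · rw [rep, if_neg hl, evalW_singleton]
      have hcc := hc l (mem_cons_self) hl
      have hcev : Commute (f m) (ev f l) := by
        rcases l with ⟨k, s⟩
        cases s
        · exact (hcc.inv_left).symm
        · exact hcc.symm
      rw [hcev.eq]
      group

lemma surgery_window (f : ℕ → G) (m : ℕ) (M : Word)
    (hb : ∀ l ∈ M, l.1 = m+1 → f m * f (m+1) * f m = f (m+1) * f m * f (m+1))
    (hc : ∀ l ∈ M, l.1 ≠ m+1 → Commute (f l.1) (f m)) :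
    evalW f ([((m : ℕ), true)] ++ M ++ [((m : ℕ), false)]) = evalW f (M.flatMap (rep m)) := by
  rw [evalW_append, evalW_append, evalW_singleton, evalW_singleton, ← surgery_conj f m M hb hc]
  have e1 : ev f ((m : ℕ), true) = f m := rfl
  have e2 : ev f ((m : ℕ), false) = (f m)⁻¹ := rfl
  rw [e1, e2, mul_assoc]

@[simp] lemma permUpTo_zero (w : Word) : permUpTo w 0 = 1 := rfl

lemma permUpTo_length (w : Word) : permUpTo w w.length = permOfWord w := by
  simp [permUpTo]

lemma permUpTo_prefix {X : Word} (Y : Word) {n : ℕ} (h : n ≤ X.length) :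
    permUpTo (X ++ Y) n = permUpTo X n := by
  unfold permUpTo
  rw [List.take_append_of_le_length h]

lemma permUpTo_append_add (X Y : Word) (j : ℕ) :
    permUpTo (X ++ Y) (X.length + j) = permUpTo Y j * permOfWord X := by
  unfold permUpTo
  rw [List.take_append, permOfWord_append, Nat.add_sub_cancel_left,
    List.take_of_length_le (by omega : X.length ≤ X.length + j)]

lemma permUpTo_succ (w : Word) {n : ℕ} (h : n < w.length) :
    permUpTo w (n+1) = letterPerm (w.getD n (0, true)) * permUpTo w n := by
  unfold permUpTo
  rw [List.take_succ, List.getElem?_eq_getElem h]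
  have : (some w[n]).toList = [w[n]] := rfl
  rw [this, permOfWord_append, permOfWord_singleton, List.getD_eq_getElem _ _ h]

/-- over-label relative to a base permutation -/
def oLab (Q : Equiv.Perm ℕ) (Y : Word) (j : ℕ) : ℕ :=
  (permUpTo Y j * Q)⁻¹
    (if (Y.getD j (0, true)).2 then (Y.getD j (0, true)).1 else (Y.getD j (0, true)).1 + 1)

/-- under-label relative to a base permutation -/
def uLab (Q : Equiv.Perm ℕ) (Y : Word) (j : ℕ) : ℕ :=
  (permUpTo Y j * Q)⁻¹
    (if (Y.getD j (0, true)).2 then (Y.getD j (0, true)).1 + 1 else (Y.getD j (0, true)).1)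

lemma overLabel_eq_oLab (w : Word) (n : ℕ) : overLabel w n = oLab 1 w n := by
  simp [overLabel, oLab]

lemma underLabel_eq_uLab (w : Word) (n : ℕ) : underLabel w n = uLab 1 w n := by
  simp [underLabel, uLab]

lemma oLab_prefix (Q : Equiv.Perm ℕ) {X : Word} (Y : Word) {j : ℕ} (h : j < X.length) :
    oLab Q (X ++ Y) j = oLab Q X j := by
  unfold oLab
  rw [permUpTo_prefix Y (le_of_lt h), List.getD_append _ _ _ _ h]

lemma uLab_prefix (Q : Equiv.Perm ℕ) {X : Word} (Y : Word) {j : ℕ} (h : j < X.length) :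
    uLab Q (X ++ Y) j = uLab Q X j := by
  unfold uLab
  rw [permUpTo_prefix Y (le_of_lt h), List.getD_append _ _ _ _ h]

lemma getD_append_add (X Y : Word) (j : ℕ) (d : Letter) :
    (X ++ Y).getD (X.length + j) d = Y.getD j d := by
  rw [List.getD_append_right _ _ _ _ (by omega : X.length ≤ X.length + j)]
  congr 1
  omega

lemma oLab_shift (Q : Equiv.Perm ℕ) (X Y : Word) (j : ℕ) :
    oLab Q (X ++ Y) (X.length + j) = oLab (permOfWord X * Q) Y j := by
  unfold oLab
  rw [permUpTo_append_add, getD_append_add, mul_assoc]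

lemma uLab_shift (Q : Equiv.Perm ℕ) (X Y : Word) (j : ℕ) :
    uLab Q (X ++ Y) (X.length + j) = uLab (permOfWord X * Q) Y j := by
  unfold uLab
  rw [permUpTo_append_add, getD_append_add, mul_assoc]

lemma overLabel_shift (X Y : Word) (j : ℕ) :
    overLabel (X ++ Y) (X.length + j) = oLab (permOfWord X) Y j := by
  rw [overLabel_eq_oLab, oLab_shift, mul_one]

lemma underLabel_shift (X Y : Word) (j : ℕ) :
    underLabel (X ++ Y) (X.length + j) = uLab (permOfWord X) Y j := by
  rw [underLabel_eq_uLab, uLab_shift, mul_one]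

lemma overLabel_prefix {X : Word} (Y : Word) {j : ℕ} (h : j < X.length) :
    overLabel (X ++ Y) j = overLabel X j := by
  rw [overLabel_eq_oLab, overLabel_eq_oLab, oLab_prefix _ _ h]

lemma underLabel_prefix {X : Word} (Y : Word) {j : ℕ} (h : j < X.length) :
    underLabel (X ++ Y) j = underLabel X j := by
  rw [underLabel_eq_uLab, underLabel_eq_uLab, uLab_prefix _ _ h]

end Surgery
section Middle

open List

lemma swap_at {a x : ℕ} : Equiv.swap a (a+1) x = if x = a then a+1 else if x = a+1 then a else x := by
  rcases eq_or_ne x a with rfl | h1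
  · simp [Equiv.swap_apply_left]
  · rcases eq_or_ne x (a+1) with rfl | h2
    · simp [Equiv.swap_apply_right, h1]
    · simp [Equiv.swap_apply_of_ne_of_ne h1 h2, h1, h2]

lemma mul_inv_apply (Q B : Equiv.Perm ℕ) (x : ℕ) : (B * Q)⁻¹ x = Q⁻¹ (B⁻¹ x) := by
  simp [mul_inv_rev]

lemma mul_mul_inv_apply (Q A B : Equiv.Perm ℕ) (x : ℕ) :
    (A * (B * Q))⁻¹ x = Q⁻¹ (B⁻¹ (A⁻¹ x)) := by
  simp [mul_inv_rev, mul_assoc]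

lemma middle (m z : ℕ) :
    ∀ (M : Word) (Q : Equiv.Perm ℕ),
    (∀ l ∈ M, l.1 ≠ m ∧ l.1 + 1 ≠ m) →
    Q z = m →
    (permOfWord (M.flatMap (rep m)) * (Equiv.swap m (m+1) * Q)
        = Equiv.swap m (m+1) * (permOfWord M * Q))
    ∧ (∀ j ≤ (M.flatMap (rep m)).length,
        (permUpTo (M.flatMap (rep m)) j * (Equiv.swap m (m+1) * Q)) z = m + 1
        ∨ (permUpTo (M.flatMap (rep m)) j * (Equiv.swap m (m+1) * Q)) z = m + 2)
    ∧ (∀ j < (M.flatMap (rep m)).length,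
        (uLab (Equiv.swap m (m+1) * Q) (M.flatMap (rep m)) j = z
          ∧ ∃ i < M.length, oLab (Equiv.swap m (m+1) * Q) (M.flatMap (rep m)) j = oLab Q M i
              ∨ oLab (Equiv.swap m (m+1) * Q) (M.flatMap (rep m)) j = uLab Q M i)
        ∨ (∃ i < M.length, oLab (Equiv.swap m (m+1) * Q) (M.flatMap (rep m)) j = oLab Q M i
            ∧ uLab (Equiv.swap m (m+1) * Q) (M.flatMap (rep m)) j = uLab Q M i)) := by
  have s1 : ∀ (m : ℕ), Equiv.swap m (m+1) m = m+1 := fun m => Equiv.swap_apply_left _ _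
  have s2 : ∀ (m : ℕ), Equiv.swap m (m+1) (m+1) = m := fun m => Equiv.swap_apply_right _ _
  have s3 : ∀ (m : ℕ), Equiv.swap m (m+1) (m+2) = m+2 :=
    fun m => Equiv.swap_apply_of_ne_of_ne (by omega) (by omega)
  have t1 : ∀ (m : ℕ), Equiv.swap (m+1) (m+2) m = m :=
    fun m => Equiv.swap_apply_of_ne_of_ne (by omega) (by omega)
  intro M
  induction M with
  | nil =>
    intro Q _ hQ
    refine ⟨by simp, ?_, by simp⟩
    intro j hj
    simp only [List.flatMap_nil, List.length_nil, Nat.le_zero] at hj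
    subst hj
    left
    simp only [permUpTo_zero, one_mul, Equiv.Perm.mul_apply, hQ, s1]
  | cons l T ih =>
    intro Q hidx hQ
    have hl := hidx l (List.mem_cons_self)
    have hQiz : Q⁻¹ m = z := by rw [← hQ, perm_inv_apply_self]
    set QT : Equiv.Perm ℕ := letterPerm l * Q with hQTdef
    have hQT : QT z = m := by
      simp only [hQTdef, Equiv.Perm.mul_apply, hQ, letterPerm]
      rw [swap_at]
      simp only [if_neg (Ne.symm hl.1), if_neg (by omega : m ≠ l.1 + 1)]
    obtain ⟨C1T, C2T, C3T⟩ := ih QT (fun x hx => hidx x (List.mem_cons_of_mem _ hx)) hQT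
    have hflat : (l :: T).flatMap (rep m) = rep m l ++ T.flatMap (rep m) := by
      simp [List.flatMap_cons]
    have hkey : permOfWord (rep m l) * (Equiv.swap m (m+1) * Q) = Equiv.swap m (m+1) * QT := by
      by_cases hcase : l.1 = m + 1
      · rw [rep, if_pos hcase]
        have hpR : permOfWord [((m+1 : ℕ), false), ((m : ℕ), l.2), ((m+1 : ℕ), true)]
            = Equiv.swap (m+1) (m+2) * Equiv.swap m (m+1) * Equiv.swap (m+1) (m+2) := by
          simp only [permOfWord, List.map_cons, List.map_nil, List.reverse_cons,
            List.reverse_nil, List.nil_append, List.prod_cons, List.prod_nil, letterPerm,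
            List.cons_append, mul_one]
          rw [show m+1+1 = m+2 from rfl, ← mul_assoc]
        rw [hpR, hQTdef, letterPerm, hcase]
        rw [swap_triple']
        rw [show m+1+1 = m+2 from rfl]
        calc Equiv.swap m (m+2) * (Equiv.swap m (m+1) * Q)
            = (Equiv.swap m (m+1) * Equiv.swap (m+1) (m+2) * Equiv.swap m (m+1))
              * (Equiv.swap m (m+1) * Q) := by rw [swap_triple]
          _ = Equiv.swap m (m+1) * (Equiv.swap (m+1) (m+2) * Q) := by
              simp [mul_assoc, Equiv.swap_mul_self_mul]
      · rw [rep, if_neg hcase, permOfWord_singleton, hQTdef, letterPerm]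
        have hcomm := swap_commute (k := l.1) (m := m) hl.1 hl.2 hcase
        calc Equiv.swap l.1 (l.1+1) * (Equiv.swap m (m+1) * Q)
            = (Equiv.swap l.1 (l.1+1) * Equiv.swap m (m+1)) * Q := by rw [mul_assoc]
          _ = (Equiv.swap m (m+1) * Equiv.swap l.1 (l.1+1)) * Q := by rw [hcomm.eq]
          _ = Equiv.swap m (m+1) * (Equiv.swap l.1 (l.1+1) * Q) := by rw [mul_assoc]
    have hshiftP : ∀ j' : ℕ,
        permUpTo ((l :: T).flatMap (rep m)) ((rep m l).length + j') * (Equiv.swap m (m+1) * Q)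
          = permUpTo (T.flatMap (rep m)) j' * (Equiv.swap m (m+1) * QT) := by
      intro j'
      rw [hflat, permUpTo_append_add, mul_assoc, hkey]
    refine ⟨?_, ?_, ?_⟩
    · -- C1
      rw [hflat, permOfWord_append, mul_assoc, hkey, C1T, permOfWord_cons, hQTdef]
      simp [mul_assoc]
    · -- C2
      intro j hj
      by_cases hjR : j < (rep m l).length
      · rw [hflat, permUpTo_prefix _ (le_of_lt hjR)]
        by_cases hcase : l.1 = m + 1
        · rw [rep, if_pos hcase] at hjR ⊢
          have hj3 : j = 0 ∨ j = 1 ∨ j = 2 := by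
            simp only [List.length_cons, List.length_nil] at hjR; omega
          rcases hj3 with rfl | rfl | rfl
          · left
            simp only [permUpTo_zero, one_mul, Equiv.Perm.mul_apply, hQ, s1]
          · right
            have h1 : permUpTo [((m+1 : ℕ), false), ((m : ℕ), l.2), ((m+1 : ℕ), true)] 1
                = Equiv.swap (m+1) (m+2) := by
              simp [permUpTo, permOfWord, letterPerm]
            rw [h1]
            simp only [Equiv.Perm.mul_apply, hQ, s1, s2, s3]
          · right
            have h2 : permUpTo [((m+1 : ℕ), false), ((m : ℕ), l.2), ((m+1 : ℕ), true)] 2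
                = Equiv.swap m (m+1) * Equiv.swap (m+1) (m+2) := by
              simp only [permUpTo, List.take, permOfWord, List.map_cons, List.map_nil,
                List.reverse_cons, List.reverse_nil, List.nil_append, List.prod_cons,
                List.prod_nil, letterPerm, List.cons_append, mul_one]
            rw [h2]
            simp only [Equiv.Perm.mul_apply, hQ, s1, s2, s3]
        · rw [rep, if_neg hcase] at hjR ⊢
          have hj0 : j = 0 := by
            simp only [List.length_cons, List.length_nil] at hjR; omega
          subst hj0
          left
          simp only [permUpTo_zero, one_mul, Equiv.Perm.mul_apply, hQ, s1]
      · push_neg at hjR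
        obtain ⟨j', rfl⟩ : ∃ j', j = (rep m l).length + j' := ⟨j - (rep m l).length, by omega⟩
        rw [hshiftP]
        apply C2T
        rw [hflat, List.length_append] at hj
        omega
    · -- C3
      intro j hj
      by_cases hjR : j < (rep m l).length
      · have hoPre : oLab (Equiv.swap m (m+1) * Q) ((l :: T).flatMap (rep m)) j
            = oLab (Equiv.swap m (m+1) * Q) (rep m l) j := by
          rw [hflat, oLab_prefix _ _ hjR]
        have huPre : uLab (Equiv.swap m (m+1) * Q) ((l :: T).flatMap (rep m)) j
            = uLab (Equiv.swap m (m+1) * Q) (rep m l) j := by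
          rw [hflat, uLab_prefix _ _ hjR]
        have hMO : oLab Q (l :: T) 0
            = Q⁻¹ (if l.2 then l.1 else l.1 + 1) := by
          unfold oLab
          simp only [permUpTo_zero, one_mul, List.getD_cons_zero]
        have hMU : uLab Q (l :: T) 0
            = Q⁻¹ (if l.2 then l.1 + 1 else l.1) := by
          unfold uLab
          simp only [permUpTo_zero, one_mul, List.getD_cons_zero]
        have hlen0 : 0 < (l :: T).length := by simp
        by_cases hcase : l.1 = m + 1
        · rw [rep, if_pos hcase] at hoPre huPre hjR
          have hj3 : j = 0 ∨ j = 1 ∨ j = 2 := by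
            simp only [List.length_cons, List.length_nil] at hjR; omega
          set L : Word := [((m+1 : ℕ), false), ((m : ℕ), l.2), ((m+1 : ℕ), true)] with hL
          have hperm1 : permUpTo L 1 = Equiv.swap (m+1) (m+2) := by
            simp [hL, permUpTo, permOfWord, letterPerm]
          have hperm2 : permUpTo L 2 = Equiv.swap m (m+1) * Equiv.swap (m+1) (m+2) := by
            simp only [hL, permUpTo, List.take, permOfWord, List.map_cons, List.map_nil,
              List.reverse_cons, List.reverse_nil, List.nil_append, List.prod_cons,
              List.prod_nil, letterPerm, List.cons_append, mul_one]
          rcases hj3 with rfl | rfl | rfl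
          · -- block letter (m+1, false)
            have hov : oLab (Equiv.swap m (m+1) * Q) L 0 = Q⁻¹ (m+2) := by
              unfold oLab
              simp only [hL, permUpTo_zero, one_mul, List.getD_cons_zero, if_neg (Bool.false_ne_true)]
              rw [mul_inv_apply]
              simp [Equiv.swap_inv, s1, s2, s3]
            have huv : uLab (Equiv.swap m (m+1) * Q) L 0 = z := by
              unfold uLab
              simp only [hL, permUpTo_zero, one_mul, List.getD_cons_zero, if_neg (Bool.false_ne_true)]
              rw [mul_inv_apply]
              simp [Equiv.swap_inv, s1, s2, s3, hQiz]
            left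
            refine ⟨by rw [huPre, huv], 0, hlen0, ?_⟩
            rw [hoPre, hov, hMO, hMU, hcase]
            cases l.2
            · left; simp [show m+1+1 = m+2 from rfl]
            · right; simp [show m+1+1 = m+2 from rfl]
          · -- block letter (m, l.2)
            right
            refine ⟨0, hlen0, ?_, ?_⟩
            · rw [hoPre, hMO, hcase]
              unfold oLab
              rw [hperm1]
              simp only [hL, hperm1, List.getD_cons_succ, List.getD_cons_zero]
              rw [mul_mul_inv_apply]
              congr 1
              cases l.2 <;>
                simp [Equiv.swap_inv, s1, s2, s3, t1, Equiv.swap_apply_left,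
                  Equiv.swap_apply_right]
            · rw [huPre, hMU, hcase]
              unfold uLab
              rw [hperm1]
              simp only [hL, hperm1, List.getD_cons_succ, List.getD_cons_zero]
              rw [mul_mul_inv_apply]
              congr 1
              cases l.2 <;>
                simp [Equiv.swap_inv, s1, s2, s3, t1, Equiv.swap_apply_left,
                  Equiv.swap_apply_right]
          · -- block letter (m+1, true)
            have hov : oLab (Equiv.swap m (m+1) * Q) L 2 = Q⁻¹ (m+1) := by
              unfold oLab
              rw [hperm2]
              simp only [hL, hperm2, List.getD_cons_succ, List.getD_cons_zero, if_pos rfl]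
              rw [mul_mul_inv_apply, mul_inv_apply]
              simp [Equiv.swap_inv, s1, s2, s3, t1, Equiv.swap_apply_left,
                Equiv.swap_apply_right]
            have huv : uLab (Equiv.swap m (m+1) * Q) L 2 = z := by
              unfold uLab
              rw [hperm2]
              simp only [hL, hperm2, List.getD_cons_succ, List.getD_cons_zero, if_pos rfl]
              rw [mul_mul_inv_apply, mul_inv_apply]
              simp [Equiv.swap_inv, s1, s2, s3, t1, Equiv.swap_apply_left,
                Equiv.swap_apply_right, hQiz]
            left
            refine ⟨by rw [huPre, huv], 0, hlen0, ?_⟩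
            rw [hoPre, hov, hMO, hMU, hcase]
            cases l.2
            · right; simp
            · left; simp
        · -- far letter
          rw [rep, if_neg hcase] at hoPre huPre hjR
          have hj0 : j = 0 := by
            simp only [List.length_cons, List.length_nil] at hjR; omega
          subst hj0
          have hfix : ∀ x, x = l.1 ∨ x = l.1 + 1 → Equiv.swap m (m+1) x = x := by
            intro x hx
            apply Equiv.swap_apply_of_ne_of_ne
            · rcases hx with rfl | rfl
              · exact hl.1
              · exact hl.2
            · rcases hx with rfl | rfl
              · omega
              · omega
          right
          refine ⟨0, hlen0, ?_, ?_⟩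
          · rw [hoPre, hMO]
            unfold oLab
            simp only [permUpTo_zero, one_mul, List.getD_cons_zero]
            rw [mul_inv_apply, Equiv.swap_inv]
            congr 1
            cases l.2
            · simp only [if_neg (Bool.false_ne_true)]
              exact hfix _ (Or.inr rfl)
            · simp only [if_pos rfl]
              exact hfix _ (Or.inl rfl)
          · rw [huPre, hMU]
            unfold uLab
            simp only [permUpTo_zero, one_mul, List.getD_cons_zero]
            rw [mul_inv_apply, Equiv.swap_inv]
            congr 1
            cases l.2
            · simp only [if_neg (Bool.false_ne_true)]
              exact hfix _ (Or.inl rfl)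
            · simp only [if_pos rfl]
              exact hfix _ (Or.inr rfl)
      · push_neg at hjR
        obtain ⟨j', rfl⟩ : ∃ j', j = (rep m l).length + j' := ⟨j - (rep m l).length, by omega⟩
        have hj' : j' < (T.flatMap (rep m)).length := by
          rw [hflat, List.length_append] at hj; omega
        have ho : oLab (Equiv.swap m (m+1) * Q) ((l :: T).flatMap (rep m)) ((rep m l).length + j')
            = oLab (Equiv.swap m (m+1) * QT) (T.flatMap (rep m)) j' := by
          rw [hflat, oLab_shift, hkey]
        have hu : uLab (Equiv.swap m (m+1) * Q) ((l :: T).flatMap (rep m)) ((rep m l).length + j')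
            = uLab (Equiv.swap m (m+1) * QT) (T.flatMap (rep m)) j' := by
          rw [hflat, uLab_shift, hkey]
        have htrans : ∀ i, oLab QT T i = oLab Q (l :: T) (1 + i)
            ∧ uLab QT T i = uLab Q (l :: T) (1 + i) := by
          intro i
          constructor
          · have h := oLab_shift Q [l] T i
            simp only [List.length_cons, List.length_nil, permOfWord_singleton] at h
            rw [List.singleton_append, ← hQTdef] at h
            exact h.symm
          · have h := uLab_shift Q [l] T i
            simp only [List.length_cons, List.length_nil, permOfWord_singleton] at h
            rw [List.singleton_append, ← hQTdef] at h
            exact h.symm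
        rcases C3T j' hj' with ⟨huz, i, hi, hoi⟩ | ⟨i, hi, ho1, hu1⟩
        · left
          refine ⟨by rw [hu]; exact huz, 1 + i, by simp only [List.length_cons]; omega, ?_⟩
          rcases hoi with h | h
          · left; rw [ho, h, (htrans i).1]
          · right; rw [ho, h, (htrans i).2]
        · right
          exact ⟨1 + i, by simp only [List.length_cons]; omega,
            by rw [ho, ho1, (htrans i).1], by rw [hu, hu1, (htrans i).2]⟩

end Middle
section Comb

open List

/-- position of strand `z` at time `n` -/
def posW (w : Word) (z n : ℕ) : ℕ := permUpTo w n z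

/-- descending diagram wrt priority `r` -/
def Desc (w : Word) (r : ℕ → ℕ) : Prop :=
  ∀ n, n < w.length → r (overLabel w n) < r (underLabel w n)

/-- strand `z` passes under at all its crossings -/
def AllU (w : Word) (z : ℕ) : Prop := ∀ n, n < w.length → overLabel w n ≠ z

open Classical in
/-- the strands that are involved in at least one crossing -/
noncomputable def CS (p : ℕ) (w : Word) : Finset ℕ :=
  (Finset.range p).filter (fun i => ∃ n, n < w.length ∧ (overLabel w n = i ∨ underLabel w n = i))

/-- number of time slots at which strand `z` is at position `m` -/
def cnt (w : Word) (z m : ℕ) : ℕ :=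
  (List.range (w.length+1)).countP (fun n => decide (posW w z n = m))

lemma mem_CS {p : ℕ} {w : Word} {i : ℕ} :
    i ∈ CS p w ↔ i < p ∧ ∃ n, n < w.length ∧ (overLabel w n = i ∨ underLabel w n = i) := by
  simp [CS]

@[simp] lemma posW_zero (w : Word) (z : ℕ) : posW w z 0 = z := rfl

lemma posW_succ (w : Word) (z : ℕ) {n : ℕ} (h : n < w.length) :
    posW w z (n+1) = letterPerm (w.getD n (0, true)) (posW w z n) := by
  unfold posW
  rw [permUpTo_succ w h, Equiv.Perm.mul_apply]

lemma posW_last (w : Word) (z : ℕ) (h : permOfWord w = 1) : posW w z w.length = z := by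
  unfold posW
  rw [permUpTo_length, h, Equiv.Perm.one_apply]

lemma WF_sub {p : ℕ} {w w' : Word} (h : WF p w) (hsub : ∀ l ∈ w', l ∈ w) : WF p w' :=
  fun l hl => h l (hsub l hl)

lemma permOfWord_lt {p : ℕ} {w : Word} (h : WF p w) {x : ℕ} (hx : x < p) :
    permOfWord w x < p := by
  induction w generalizing x with
  | nil => simpa [permOfWord]
  | cons l t ih =>
    rw [permOfWord_cons, Equiv.Perm.mul_apply]
    apply ih (fun a ha => h a (List.mem_cons_of_mem _ ha))
    have hl := h l (List.mem_cons_self)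
    rw [letterPerm, swap_at]
    split
    · omega
    · split
      · omega
      · exact hx

lemma permOfWord_inv_lt {p : ℕ} {w : Word} (h : WF p w) {x : ℕ} (hx : x < p) :
    (permOfWord w)⁻¹ x < p := by
  induction w generalizing x with
  | nil => simpa [permOfWord]
  | cons l t ih =>
    rw [permOfWord_cons, mul_inv_apply]
    have hl := h l (List.mem_cons_self)
    have h1 := ih (fun a ha => h a (List.mem_cons_of_mem _ ha)) hx
    rw [letterPerm, Equiv.swap_inv, swap_at]
    split
    · omega
    · split
      · omega
      · exact h1

lemma permUpTo_lt {p : ℕ} {w : Word} (h : WF p w) (n : ℕ) {x : ℕ} (hx : x < p) :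
    permUpTo w n x < p :=
  permOfWord_lt (WF_sub h (fun l hl => List.mem_of_mem_take hl)) hx

lemma permUpTo_inv_lt {p : ℕ} {w : Word} (h : WF p w) (n : ℕ) {x : ℕ} (hx : x < p) :
    (permUpTo w n)⁻¹ x < p :=
  permOfWord_inv_lt (WF_sub h (fun l hl => List.mem_of_mem_take hl)) hx

lemma posW_lt {p : ℕ} {w : Word} (h : WF p w) {z : ℕ} (hz : z < p) (n : ℕ) :
    posW w z n < p := permUpTo_lt h n hz

lemma getD_mem {w : Word} {n : ℕ} (h : n < w.length) : w.getD n (0, true) ∈ w := by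
  rw [List.getD_eq_getElem _ _ h]
  exact List.getElem_mem _

lemma overLabel_lt {p : ℕ} {w : Word} (h : WF p w) {n : ℕ} (hn : n < w.length) :
    overLabel w n < p := by
  unfold overLabel
  apply permUpTo_inv_lt h
  have := h _ (getD_mem hn)
  split <;> omega

lemma underLabel_lt {p : ℕ} {w : Word} (h : WF p w) {n : ℕ} (hn : n < w.length) :
    underLabel w n < p := by
  unfold underLabel
  apply permUpTo_inv_lt h
  have := h _ (getD_mem hn)
  split <;> omega

lemma over_ne_under {w : Word} (n : ℕ) : overLabel w n ≠ underLabel w n := by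
  unfold overLabel underLabel
  intro h
  have := (Equiv.injective _) h
  revert this
  split <;> omega

lemma overLabel_mem_CS {p : ℕ} {w : Word} (h : WF p w) {n : ℕ} (hn : n < w.length) :
    overLabel w n ∈ CS p w :=
  mem_CS.mpr ⟨overLabel_lt h hn, n, hn, Or.inl rfl⟩

lemma underLabel_mem_CS {p : ℕ} {w : Word} (h : WF p w) {n : ℕ} (hn : n < w.length) :
    underLabel w n ∈ CS p w :=
  mem_CS.mpr ⟨underLabel_lt h hn, n, hn, Or.inr rfl⟩

/-- at a crossing, the position of z determines whether z is the over/under strand -/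
lemma under_iff_pos {w : Word} {z : ℕ} {n : ℕ} :
    underLabel w n = z ↔
      posW w z n = (if (w.getD n (0,true)).2 then (w.getD n (0,true)).1 + 1
        else (w.getD n (0,true)).1) := by
  unfold underLabel posW
  rw [Equiv.Perm.inv_def, Equiv.symm_apply_eq]
  exact eq_comm

lemma over_iff_pos {w : Word} {z : ℕ} {n : ℕ} :
    overLabel w n = z ↔
      posW w z n = (if (w.getD n (0,true)).2 then (w.getD n (0,true)).1
        else (w.getD n (0,true)).1 + 1) := by
  unfold overLabel posW
  rw [Equiv.Perm.inv_def, Equiv.symm_apply_eq]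
  exact eq_comm

/-- if the position of z doesn't move, the letter doesn't touch it -/
lemma no_touch {w : Word} {z : ℕ} {n c : ℕ} (hn : n < w.length)
    (h1 : posW w z n = c) (h2 : posW w z (n+1) = c) :
    (w.getD n (0,true)).1 ≠ c ∧ (w.getD n (0,true)).1 + 1 ≠ c := by
  rw [posW_succ w z hn, h1] at h2
  rw [letterPerm, swap_at] at h2
  constructor
  · intro hk
    rw [if_pos hk.symm] at h2
    omega
  · intro hk
    rw [if_neg (by omega), if_pos hk.symm] at h2
    omega

lemma shape_enter {w : Word} {z : ℕ} (hall : AllU w z) {n c : ℕ} (hn : n < w.length)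
    (h1 : posW w z n = c + 1) (h2 : posW w z (n+1) = c) :
    w.getD n (0,true) = (c, true) := by
  rcases hld : w.getD n (0,true) with ⟨k, s⟩
  have hm := posW_succ w z hn
  rw [hld, letterPerm, h1, h2, swap_at] at hm
  have hover := hall n hn
  rw [Ne, over_iff_pos, h1, hld] at hover
  simp only at hover
  by_cases hk1 : c + 1 = k
  · rw [if_pos hk1] at hm; omega
  · rw [if_neg hk1] at hm
    by_cases hk2 : c + 1 = k + 1
    · rw [if_pos hk2] at hm
      have hkc : k = c := by omega
      cases s
      · exfalso
        simp only [Bool.false_eq_true, if_false] at hover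
        exact hover (by omega)
      · rw [hkc]
    · rw [if_neg hk2] at hm; omega

lemma shape_exit {w : Word} {z : ℕ} (hall : AllU w z) {n c : ℕ} (hn : n < w.length)
    (h1 : posW w z n = c) (h2 : posW w z (n+1) = c + 1) :
    w.getD n (0,true) = (c, false) := by
  rcases hld : w.getD n (0,true) with ⟨k, s⟩
  have hm := posW_succ w z hn
  rw [hld, letterPerm, h1, h2, swap_at] at hm
  have hover := hall n hn
  rw [Ne, over_iff_pos, h1, hld] at hover
  simp only at hover
  by_cases hk1 : c = k
  · subst hk1
    cases s
    · rfl
    · exfalso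
      simp at hover
  · rw [if_neg hk1] at hm
    by_cases hk2 : c = k + 1
    · rw [if_pos hk2] at hm; omega
    · rw [if_neg hk2] at hm; omega

end Comb
section Rot

open List

lemma oLab_one (Q : Equiv.Perm ℕ) (Y : Word) (j : ℕ) :
    oLab Q Y j = Q⁻¹ (oLab 1 Y j) := by
  unfold oLab
  rw [mul_inv_apply]
  simp

lemma uLab_one (Q : Equiv.Perm ℕ) (Y : Word) (j : ℕ) :
    uLab Q Y j = Q⁻¹ (uLab 1 Y j) := by
  unfold uLab
  rw [mul_inv_apply]
  simp

lemma toBraid_append (p : ℕ) (X Y : Word) :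
    toBraid p (X ++ Y) = toBraid p X * toBraid p Y := by
  rw [toBraid_eq_evalW, toBraid_eq_evalW, toBraid_eq_evalW, evalW_append]

lemma rotate_step (p : ℕ) (w : Word) (r : ℕ → ℕ) (z t : ℕ)
    (hWF : WF p w) (hpure : permOfWord w = 1) (hinj : Function.Injective r)
    (hdesc : Desc w r) (hall : AllU w z) (hzp : z < p)
    (hmax : ∀ i ∈ CS p w, r i ≤ r z)
    (ht : t ≤ w.length) :
    ∃ (w' : Word) (r' : ℕ → ℕ) (z' : ℕ),
      WF p w' ∧ permOfWord w' = 1 ∧ Function.Injective r' ∧ Desc w' r' ∧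
      AllU w' z' ∧ z' < p ∧ (∀ i ∈ CS p w', r' i ≤ r' z') ∧
      (toBraid p w' = 1 → toBraid p w = 1) ∧
      (insert z' (CS p w')).card ≤ (insert z (CS p w)).card ∧
      w'.length = w.length ∧
      (∀ n, n ≤ w.length - t → posW w' z' n = posW w z (t+n)) ∧
      (∀ j, j ≤ t → posW w' z' ((w.length - t) + j) = posW w z j) := by
  classical
  set u : Word := w.take t with hu
  set v : Word := w.drop t with hv
  have hul : u.length = t := by rw [hu, List.length_take]; omega
  have hvl : v.length = w.length - t := by rw [hv, List.length_drop]
  have hw : u ++ v = w := List.take_append_drop t w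
  set P : Equiv.Perm ℕ := permUpTo w t with hP
  have hPu : permOfWord u = P := rfl
  have hPv : permOfWord v = P⁻¹ := by
    have h1 : permOfWord v * permOfWord u = 1 := by
      rw [← permOfWord_append, hw, hpure]
    rw [hPu] at h1
    rw [eq_inv_iff_mul_eq_one]
    exact h1
  refine ⟨v ++ u, fun i => r (P⁻¹ i), P z, ?_⟩
  have hlen : (v ++ u).length = w.length := by
    rw [List.length_append, hul, hvl]; omega
  -- label correspondence
  have hlab1 : ∀ n, n < v.length →
      overLabel (v ++ u) n = P (overLabel w (t + n))
      ∧ underLabel (v ++ u) n = P (underLabel w (t + n)) := by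
    intro n hn
    have ho : overLabel w (t + n) = P⁻¹ (overLabel (v ++ u) n) := by
      conv_lhs => rw [← hw]
      rw [show t + n = u.length + n by rw [hul], overLabel_shift, hPu, oLab_one,
        overLabel_prefix _ hn, overLabel_eq_oLab]
    have hu' : underLabel w (t + n) = P⁻¹ (underLabel (v ++ u) n) := by
      conv_lhs => rw [← hw]
      rw [show t + n = u.length + n by rw [hul], underLabel_shift, hPu, uLab_one,
        underLabel_prefix _ hn, underLabel_eq_uLab]
    constructor
    · rw [ho, perm_apply_inv_self]
    · rw [hu', perm_apply_inv_self]
  have hlab2 : ∀ j, j < t →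
      overLabel (v ++ u) (v.length + j) = P (overLabel w j)
      ∧ underLabel (v ++ u) (v.length + j) = P (underLabel w j) := by
    intro j hj
    have hju : j < u.length := by omega
    constructor
    · rw [overLabel_shift, hPv, oLab_one, inv_inv]
      congr 1
      conv_rhs => rw [← hw]
      rw [overLabel_prefix _ hju, overLabel_eq_oLab]
    · rw [underLabel_shift, hPv, uLab_one, inv_inv]
      congr 1
      conv_rhs => rw [← hw]
      rw [underLabel_prefix _ hju, underLabel_eq_uLab]
  -- position correspondence
  have hpos1 : ∀ n, n ≤ w.length - t → posW (v ++ u) (P z) n = posW w z (t + n) := by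
    intro n hn
    have hn' : n ≤ v.length := by omega
    unfold posW
    rw [permUpTo_prefix _ hn']
    have h1 : permUpTo w (t + n) = permUpTo v n * P := by
      conv_lhs => rw [← hw]
      rw [show t + n = u.length + n by rw [hul], permUpTo_append_add, hPu]
    rw [h1, Equiv.Perm.mul_apply]
  have hpos2 : ∀ j, j ≤ t → posW (v ++ u) (P z) (v.length + j) = posW w z j := by
    intro j hj
    unfold posW
    rw [permUpTo_append_add, hPv]
    have h2 : permUpTo u j = permUpTo w j := by
      conv_rhs => rw [← hw]
      rw [permUpTo_prefix _ (by omega : j ≤ u.length)]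
    rw [Equiv.Perm.mul_apply, perm_inv_apply_self, h2]
  -- index decomposition for n < length
  have hcase : ∀ n, n < w.length →
      (overLabel (v ++ u) n = P (overLabel w (if n < v.length then t + n else n - v.length))
      ∧ underLabel (v ++ u) n = P (underLabel w (if n < v.length then t + n else n - v.length)))
      ∧ (if n < v.length then t + n else n - v.length) < w.length := by
    intro n hn
    by_cases h : n < v.length
    · rw [if_pos h]
      exact ⟨hlab1 n h, by omega⟩
    · rw [if_neg h]
      push_neg at h
      obtain ⟨j, rfl⟩ : ∃ j, n = v.length + j := ⟨n - v.length, by omega⟩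
      have hjt : j < t := by omega
      have := hlab2 j hjt
      simpa using ⟨this, by omega⟩
  refine ⟨?_, ?_, ?_, ?_, ?_, ?_, ?_, ?_, ?_, hlen, hpos1, by rw [← hvl]; exact hpos2⟩
  · -- WF
    intro l hl
    apply hWF
    rcases List.mem_append.mp hl with h | h
    · exact List.mem_of_mem_drop h
    · exact List.mem_of_mem_take h
  · -- pure
    rw [permOfWord_append, hPu, hPv, mul_inv_cancel]
  · -- injective
    intro a b hab
    have := hinj hab
    exact (Equiv.injective _) this
  · -- Desc
    intro n hn
    rw [hlen] at hn
    obtain ⟨⟨ho, hu'⟩, hidx⟩ := hcase n hn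
    rw [ho, hu']
    simp only [perm_inv_apply_self]
    exact hdesc _ hidx
  · -- AllU
    intro n hn
    rw [hlen] at hn
    obtain ⟨⟨ho, _⟩, hidx⟩ := hcase n hn
    rw [ho]
    intro hPz
    exact hall _ hidx ((Equiv.injective P) hPz)
  · -- z' < p
    exact permUpTo_lt hWF t hzp
  · -- max
    intro i hi
    simp only [perm_inv_apply_self]
    obtain ⟨hip, n, hn, hlab⟩ := mem_CS.mp hi
    rw [hlen] at hn
    obtain ⟨⟨ho, hu'⟩, hidx⟩ := hcase n hn
    rcases hlab with h | h
    · rw [← h, ho]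
      simp only [perm_inv_apply_self]
      exact hmax _ (overLabel_mem_CS hWF hidx)
    · rw [← h, hu']
      simp only [perm_inv_apply_self]
      exact hmax _ (underLabel_mem_CS hWF hidx)
  · -- toBraid
    intro h1
    rw [toBraid_append] at h1
    have h2 : toBraid p u = (toBraid p v)⁻¹ := eq_inv_of_mul_eq_one_right h1
    rw [← hw, toBraid_append, h2, inv_mul_cancel]
  · -- card
    have hsub : insert (P z) (CS p (v ++ u)) ⊆ (insert z (CS p w)).image (fun x => P x) := by
      intro i hi
      rcases Finset.mem_insert.mp hi with rfl | hi
      · exact Finset.mem_image.mpr ⟨z, Finset.mem_insert_self _ _, rfl⟩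
      · obtain ⟨hip, n, hn, hlab⟩ := mem_CS.mp hi
        rw [hlen] at hn
        obtain ⟨⟨ho, hu'⟩, hidx⟩ := hcase n hn
        rcases hlab with h | h
        · refine Finset.mem_image.mpr ⟨overLabel w _, ?_, by rw [← h, ho]⟩
          exact Finset.mem_insert_of_mem (overLabel_mem_CS hWF hidx)
        · refine Finset.mem_image.mpr ⟨underLabel w _, ?_, by rw [← h, hu']⟩
          exact Finset.mem_insert_of_mem (underLabel_mem_CS hWF hidx)
    calc (insert (P z) (CS p (v ++ u))).card
        ≤ ((insert z (CS p w)).image (fun x => P x)).card := Finset.card_le_card hsub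
      _ ≤ (insert z (CS p w)).card := Finset.card_image_le

end Rot
section Retract

open List

set_option maxHeartbeats 1000000 in
lemma retract_step (p : ℕ) (w : Word) (r : ℕ → ℕ) (z m : ℕ)
    (hWF : WF p w) (hpure : permOfWord w = 1) (hinj : Function.Injective r)
    (hdesc : Desc w r) (hall : AllU w z) (hzp : z < p)
    (hmax : ∀ i ∈ CS p w, r i ≤ r z)
    (hlb : ∀ n, n ≤ w.length → m ≤ posW w z n)
    (hat : ∃ n, n ≤ w.length ∧ posW w z n = m)
    (h0 : posW w z 0 ≠ m) :
    ∃ w' : Word,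
      WF p w' ∧ permOfWord w' = 1 ∧ Desc w' r ∧ AllU w' z ∧
      (∀ i ∈ CS p w', r i ≤ r z) ∧
      (toBraid p w' = 1 → toBraid p w = 1) ∧
      (insert z (CS p w')).card ≤ (insert z (CS p w)).card ∧
      (∀ n, n ≤ w'.length → m ≤ posW w' z n) ∧
      cnt w' z m < cnt w z m := by
  classical
  obtain ⟨ns, hns, hnsm⟩ := hat
  have hzm : z ≠ m := by rw [← posW_zero w z]; exact h0
  have hL0 : posW w z w.length = z := posW_last w z hpure
  -- find the beginning of the minimal interval
  have hdex : ∃ d, posW w z (ns - d) ≠ m := ⟨ns, by rw [Nat.sub_self]; exact h0⟩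
  have hd1 : posW w z (ns - Nat.find hdex) ≠ m := Nat.find_spec hdex
  have hdlt : ∀ d, d < Nat.find hdex → posW w z (ns - d) = m :=
    fun d hdd => not_not.mp (Nat.find_min hdex hdd)
  have hdpos : 0 < Nat.find hdex := by
    rcases Nat.eq_zero_or_pos (Nat.find hdex) with h | h
    · exfalso; apply hd1; rw [h, Nat.sub_zero]; exact hnsm
    · exact h
  have hdle : Nat.find hdex ≤ ns := Nat.find_le (by rw [Nat.sub_self]; exact h0)
  -- find the end of the minimal interval
  have heex : ∃ e, posW w z (ns + e) ≠ m :=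
    ⟨w.length - ns, by rw [show ns + (w.length - ns) = w.length by omega, hL0]; exact hzm⟩
  have he1 : posW w z (ns + Nat.find heex) ≠ m := Nat.find_spec heex
  have helt : ∀ e, e < Nat.find heex → posW w z (ns + e) = m :=
    fun e hee => not_not.mp (Nat.find_min heex hee)
  have hepos : 0 < Nat.find heex := by
    rcases Nat.eq_zero_or_pos (Nat.find heex) with h | h
    · exfalso; apply he1; rw [h, Nat.add_zero]; exact hnsm
    · exact h
  have hele : Nat.find heex ≤ w.length - ns := by
    apply Nat.find_le
    rw [show ns + (w.length - ns) = w.length by omega, hL0]; exact hzm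
  set i0 : ℕ := ns - Nat.find hdex with hi0def
  set b : ℕ := ns + Nat.find heex with hbdef
  have hbL : b ≤ w.length := by omega
  have hi0b : i0 + 1 < b := by omega
  have hi0L : i0 < w.length := by omega
  have hmid : ∀ tt, i0 + 1 ≤ tt → tt < b → posW w z tt = m := by
    intro tt h1 h2
    rcases le_or_gt tt ns with h | h
    · rw [show tt = ns - (ns - tt) by omega]
      exact hdlt _ (by omega)
    · rw [show tt = ns + (tt - ns) by omega]
      exact helt _ (by omega)
  have hpa : posW w z (i0 + 1) = m := hmid _ le_rfl hi0b
  have hpi0 : posW w z i0 = m + 1 := by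
    have hstep := posW_succ w z hi0L
    rw [letterPerm, swap_at] at hstep
    have hge := hlb i0 (by omega)
    rw [hpa] at hstep
    by_cases hc1 : posW w z i0 = (w.getD i0 (0,true)).1
    · rw [if_pos hc1] at hstep; omega
    · rw [if_neg hc1] at hstep
      by_cases hc2 : posW w z i0 = (w.getD i0 (0,true)).1 + 1
      · rw [if_pos hc2] at hstep; omega
      · rw [if_neg hc2] at hstep
        exfalso; exact hd1 hstep.symm
  have henter : w.getD i0 (0,true) = (m, true) := shape_enter hall hi0L hpi0 hpa
  have hi1L : b - 1 < w.length := by omega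
  have hpi1 : posW w z (b-1) = m := hmid _ (by omega) (by omega)
  have hpb : posW w z b = m + 1 := by
    have hstep := posW_succ w z hi1L
    rw [show b - 1 + 1 = b by omega] at hstep
    rw [letterPerm, swap_at] at hstep
    have hge := hlb b hbL
    rw [hpi1] at hstep
    by_cases hc1 : m = (w.getD (b-1) (0,true)).1
    · rw [if_pos hc1] at hstep
      by_cases hc3 : posW w z b = m + 1
      · exact hc3
      · omega
    · rw [if_neg hc1] at hstep
      by_cases hc2 : m = (w.getD (b-1) (0,true)).1 + 1
      · rw [if_pos hc2] at hstep; omega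
      · rw [if_neg hc2] at hstep
        exfalso; exact he1 hstep
  have hexit : w.getD (b-1) (0,true) = (m, false) :=
    shape_exit hall hi1L hpi1 (by rw [show b - 1 + 1 = b by omega]; exact hpb)
  -- decomposition
  set A : Word := w.take i0 with hA
  set M : Word := (w.drop (i0+1)).take (b - 1 - (i0+1)) with hM
  set B : Word := w.drop b with hB
  have hAl : A.length = i0 := by rw [hA, List.length_take]; omega
  have hMl : M.length = b - i0 - 2 := by
    rw [hM, List.length_take, List.length_drop]; omega
  have hBl : B.length = w.length - b := by rw [hB, List.length_drop]
  have hdropi1 : w.drop (b-1) = ((m : ℕ),false) :: B := by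
    rw [List.drop_eq_getElem_cons hi1L, ← List.getD_eq_getElem w (0,true) hi1L, hexit, hB,
      show b - 1 + 1 = b by omega]
  have hdropa : w.drop (i0+1) = M ++ (((m : ℕ),false) :: B) := by
    conv_lhs => rw [← List.take_append_drop (b - 1 - (i0+1)) (w.drop (i0+1))]
    rw [List.drop_drop, show (i0+1) + (b - 1 - (i0+1)) = b - 1 by omega, hdropi1, ← hM]
  have hdecomp : w = A ++ (((m : ℕ),true) :: (M ++ (((m : ℕ),false) :: B))) := by
    conv_lhs => rw [← List.take_append_drop i0 w]
    rw [List.drop_eq_getElem_cons hi0L, ← List.getD_eq_getElem w (0,true) hi0L, henter,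
      hdropa, ← hA]
  -- base permutation at the top of the window
  set Q : Equiv.Perm ℕ := permUpTo w (i0+1) with hQdef
  have hQz : Q z = m := hpa
  have htake1 : w.take (i0+1) = A ++ [((m : ℕ),true)] := by
    rw [List.take_succ, List.getElem?_eq_getElem hi0L]
    simp only [Option.toList_some]
    rw [← List.getD_eq_getElem w (0,true) hi0L, henter, ← hA]
  have hPA1 : permOfWord (A ++ [((m : ℕ),true)]) = Q := by
    rw [hQdef]
    unfold permUpTo
    rw [htake1]
  have hQA : Q = Equiv.swap m (m+1) * permOfWord A := by
    rw [← hPA1, permOfWord_append, permOfWord_singleton, letterPerm]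
  have hbase : permOfWord A = Equiv.swap m (m+1) * Q := by
    rw [hQA, ← mul_assoc, Equiv.swap_mul_self, one_mul]
  -- letters of M do not touch position m
  have hMget : ∀ i, i < M.length → M.getD i (0,true) = w.getD (i0+1+i) (0,true) := by
    intro i hi
    conv_rhs => rw [hdecomp]
    rw [show i0 + 1 + i = A.length + (1 + i) by rw [hAl]; omega, getD_append_add,
      show 1 + i = i + 1 by omega, List.getD_cons_succ, List.getD_append _ _ _ _ hi]
  have hMsub : ∀ l ∈ M, l ∈ w := by
    intro l hl
    rw [hM] at hl
    exact List.mem_of_mem_drop (List.mem_of_mem_take hl)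
  have hMidx : ∀ l ∈ M, l.1 ≠ m ∧ l.1 + 1 ≠ m := by
    intro l hl
    obtain ⟨i, hi, rfl⟩ := List.mem_iff_getElem.mp hl
    rw [show M[i] = M.getD i (0,true) from (List.getD_eq_getElem M (0,true) hi).symm,
      hMget i hi]
    have hiM : i < M.length := hi
    rw [hMl] at hiM
    exact no_touch (by omega : i0+1+i < w.length)
      (hmid _ (by omega) (by omega))
      (by rw [show i0+1+i+1 = i0+1+(i+1) by omega]
          exact hmid _ (by omega) (by omega))
  obtain ⟨C1, C2, C3⟩ := middle m z M Q hMidx hQz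
  set M' : Word := M.flatMap (rep m) with hM'
  -- decomposition bookkeeping
  have hwassoc : w = (A ++ [((m : ℕ),true)]) ++ (M ++ (((m : ℕ),false) :: B)) := by
    rw [hdecomp, List.append_assoc, List.singleton_append]
  have hA1len : (A ++ [((m : ℕ),true)]).length = i0 + 1 := by
    simp [hAl]
  have hQi1 : permUpTo w (b-1) = permOfWord M * Q := by
    have h1 : b - 1 = (A ++ [((m:ℕ),true)]).length + M.length := by
      rw [hA1len, hMl]; omega
    rw [h1]
    conv_lhs => rw [hwassoc]
    rw [permUpTo_append_add, hPA1]
    congr 1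
    rw [permUpTo_prefix _ (le_refl M.length), permUpTo_length]
  have hQb : permUpTo w b = Equiv.swap m (m+1) * (permOfWord M * Q) := by
    have h2 := permUpTo_succ w (show b - 1 < w.length from hi1L)
    rw [show b - 1 + 1 = b by omega] at h2
    rw [h2, hexit, hQi1, letterPerm]
  have hPAM : permOfWord (A ++ M') = permUpTo w b := by
    rw [permOfWord_append, hbase, C1, ← hQb]
  have hwb : w = w.take b ++ B := by
    rw [hB]; exact (List.take_append_drop b w).symm
  have htbl : (w.take b).length = b := by rw [List.length_take]; omega
  have htbp : permOfWord (w.take b) = permUpTo w b := rfl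
  have hwlen : w.length = i0 + 1 + M.length + 1 + B.length := by
    have h := congrArg List.length hdecomp
    simp only [List.length_append, List.length_cons, hAl, hMl, hBl] at h
    omega
  have hw'len : (A ++ M' ++ B).length = i0 + M'.length + B.length := by
    rw [List.length_append, List.length_append, hAl]
  -- permUpTo of the new word, in three regions
  have hreg1p : ∀ n, n ≤ i0 → permUpTo (A ++ M' ++ B) n = permUpTo w n := by
    intro n hn
    rw [List.append_assoc, permUpTo_prefix _ (by rw [hAl]; omega)]
    conv_rhs => rw [hdecomp]
    rw [permUpTo_prefix _ (by rw [hAl]; omega)]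
  have hreg2p : ∀ j, j ≤ M'.length → permUpTo (A ++ M' ++ B) (i0 + j)
      = permUpTo M' j * (Equiv.swap m (m+1) * Q) := by
    intro j hj
    rw [List.append_assoc, show i0 + j = A.length + j by rw [hAl], permUpTo_append_add,
      permUpTo_prefix _ hj, hbase]
  have hreg3p : ∀ j, j ≤ B.length → permUpTo (A ++ M' ++ B) (i0 + M'.length + j)
      = permUpTo B j * permUpTo w b := by
    intro j hj
    rw [show i0 + M'.length + j = (A ++ M').length + j by rw [List.length_append, hAl], permUpTo_append_add, hPAM]
  have hreg3w : ∀ j, j ≤ B.length → permUpTo w (b + j) = permUpTo B j * permUpTo w b := by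
    intro j hj
    conv_lhs => rw [hwb]
    rw [show b + j = (w.take b).length + j by rw [htbl], permUpTo_append_add, htbp]
  -- labels in the three regions
  have hlab1 : ∀ n, n < i0 → overLabel (A ++ M' ++ B) n = overLabel w n
      ∧ underLabel (A ++ M' ++ B) n = underLabel w n := by
    intro n hn
    have hnA : n < A.length := by rw [hAl]; omega
    rw [List.append_assoc]
    constructor
    · rw [overLabel_prefix _ hnA]
      conv_rhs => rw [hdecomp]
      rw [overLabel_prefix _ hnA]
    · rw [underLabel_prefix _ hnA]
      conv_rhs => rw [hdecomp]
      rw [underLabel_prefix _ hnA]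
  have hlabM : ∀ i, i < M.length → overLabel w (i0+1+i) = oLab Q M i
      ∧ underLabel w (i0+1+i) = uLab Q M i := by
    intro i hi
    constructor
    · conv_lhs => rw [hwassoc]
      rw [show i0+1+i = (A ++ [((m:ℕ),true)]).length + i by rw [hA1len],
        overLabel_shift, hPA1, oLab_prefix _ _ hi]
    · conv_lhs => rw [hwassoc]
      rw [show i0+1+i = (A ++ [((m:ℕ),true)]).length + i by rw [hA1len],
        underLabel_shift, hPA1, uLab_prefix _ _ hi]
  have hlab2 : ∀ j, j < M'.length →
      overLabel (A ++ M' ++ B) (i0 + j) = oLab (Equiv.swap m (m+1) * Q) M' j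
      ∧ underLabel (A ++ M' ++ B) (i0 + j) = uLab (Equiv.swap m (m+1) * Q) M' j := by
    intro j hj
    rw [List.append_assoc]
    constructor
    · rw [show i0 + j = A.length + j by rw [hAl], overLabel_shift, oLab_prefix _ _ hj, hbase]
    · rw [show i0 + j = A.length + j by rw [hAl], underLabel_shift, uLab_prefix _ _ hj, hbase]
  have hlab3 : ∀ j, j < B.length →
      overLabel (A ++ M' ++ B) (i0 + M'.length + j) = overLabel w (b + j)
      ∧ underLabel (A ++ M' ++ B) (i0 + M'.length + j) = underLabel w (b + j) := by
    intro j hj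
    constructor
    · rw [show i0 + M'.length + j = (A ++ M').length + j by rw [List.length_append, hAl], overLabel_shift, hPAM]
      conv_rhs => rw [hwb]
      rw [show b + j = (w.take b).length + j by rw [htbl], overLabel_shift, htbp]
    · rw [show i0 + M'.length + j = (A ++ M').length + j by rw [List.length_append, hAl], underLabel_shift, hPAM]
      conv_rhs => rw [hwb]
      rw [show b + j = (w.take b).length + j by rw [htbl], underLabel_shift, htbp]
  -- labels of M in w are not z
  have hMne : ∀ i, i < M.length → overLabel w (i0+1+i) ≠ z ∧ underLabel w (i0+1+i) ≠ z := by
    intro i hi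
    have hposi : posW w z (i0+1+i) = m := hmid _ (by omega) (by rw [hMl] at hi; omega)
    have hidx2 := hMidx _ (getD_mem hi)
    rw [hMget i hi] at hidx2
    obtain ⟨hx1, hx2⟩ := hidx2
    constructor
    · rw [Ne, over_iff_pos, hposi]
      split <;> omega
    · rw [Ne, under_iff_pos, hposi]
      split <;> omega
  -- surgery hypotheses
  have hbB : ∀ l ∈ M, l.1 = m+1 →
      fB p m * fB p (m+1) * fB p m = fB p (m+1) * fB p m * fB p (m+1) := by
    intro l hl he
    have := hWF l (hMsub l hl)
    exact fB_braid p m (by omega)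
  have hcB : ∀ l ∈ M, l.1 ≠ m+1 → Commute (fB p l.1) (fB p m) := by
    intro l hl hne
    obtain ⟨h1, h2⟩ := hMidx l hl
    rcases lt_or_ge l.1 m with h | h
    · exact fB_commute p (by omega)
    · exact (fB_commute p (by omega : m + 2 ≤ l.1)).symm
  have hbP : ∀ l ∈ M, l.1 = m+1 → fP m * fP (m+1) * fP m = fP (m+1) * fP m * fP (m+1) := by
    intro _ _ _
    simp only [fP, ← MulOpposite.op_mul]
    exact congrArg _ (by rw [← mul_assoc, ← mul_assoc, swap_braid])
  have hcP : ∀ l ∈ M, l.1 ≠ m+1 → Commute (fP l.1) (fP m) := by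
    intro l hl hne
    obtain ⟨h1, h2⟩ := hMidx l hl
    have hcw := swap_commute (k := l.1) (m := m) h1 h2 hne
    show fP l.1 * fP m = fP m * fP l.1
    simp only [fP, ← MulOpposite.op_mul]
    rw [hcw.eq]
  have hwin : (((m:ℕ),true) :: (M ++ ((m:ℕ),false) :: B))
      = ([((m:ℕ),true)] ++ M ++ [((m:ℕ),false)]) ++ B := by simp
  have hsurgB : toBraid p (A ++ M' ++ B) = toBraid p w := by
    conv_rhs => rw [hdecomp]
    rw [toBraid_eq_evalW, toBraid_eq_evalW]
    calc evalW (fB p) (A ++ M' ++ B)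
        = evalW (fB p) A * evalW (fB p) M' * evalW (fB p) B := by
          rw [evalW_append, evalW_append]
      _ = evalW (fB p) A
            * evalW (fB p) ([((m:ℕ),true)] ++ M ++ [((m:ℕ),false)]) * evalW (fB p) B := by
          rw [surgery_window (fB p) m M hbB hcB]
      _ = evalW (fB p) (A ++ (((m:ℕ),true) :: (M ++ ((m:ℕ),false) :: B))) := by
          rw [hwin]
          simp [evalW_append, mul_assoc]
  have hsurgP : permOfWord (A ++ M' ++ B) = 1 := by
    have hOP : evalW fP (A ++ M' ++ B) = evalW fP w := by
      conv_rhs => rw [hdecomp]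
      calc evalW fP (A ++ M' ++ B)
          = evalW fP A * evalW fP M' * evalW fP B := by
            rw [evalW_append, evalW_append]
        _ = evalW fP A * evalW fP ([((m:ℕ),true)] ++ M ++ [((m:ℕ),false)]) * evalW fP B := by
            rw [surgery_window fP m M hbP hcP]
        _ = evalW fP (A ++ (((m:ℕ),true) :: (M ++ ((m:ℕ),false) :: B))) := by
            rw [hwin]
            simp [evalW_append, mul_assoc]
    rw [evalW_fP, evalW_fP] at hOP
    rw [MulOpposite.op_injective hOP, hpure]
  -- positions of the new word
  have hpos1 : ∀ n, n ≤ i0 → posW (A ++ M' ++ B) z n = posW w z n := by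
    intro n hn
    unfold posW
    rw [hreg1p n hn]
  have hpos2 : ∀ j, j ≤ M'.length → posW (A ++ M' ++ B) z (i0 + j) = m + 1
      ∨ posW (A ++ M' ++ B) z (i0 + j) = m + 2 := by
    intro j hj
    have := C2 j hj
    unfold posW
    rw [hreg2p j hj]
    exact this
  have hpos3 : ∀ j, j ≤ B.length → posW (A ++ M' ++ B) z (i0 + M'.length + j)
      = posW w z (b + j) := by
    intro j hj
    unfold posW
    rw [hreg3p j hj, hreg3w j hj]
  -- label properties of the new word
  have hlabels : ∀ n, n < (A ++ M' ++ B).length →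
      overLabel (A ++ M' ++ B) n ≠ z
      ∧ r (overLabel (A ++ M' ++ B) n) < r (underLabel (A ++ M' ++ B) n)
      ∧ overLabel (A ++ M' ++ B) n ∈ insert z (CS p w)
      ∧ underLabel (A ++ M' ++ B) n ∈ insert z (CS p w) := by
    intro n hn
    rw [hw'len] at hn
    rcases lt_or_ge n i0 with hc1 | hc1
    · obtain ⟨ho, hu⟩ := hlab1 n hc1
      have hnw : n < w.length := by omega
      rw [ho, hu]
      exact ⟨hall n hnw, hdesc n hnw,
        Finset.mem_insert_of_mem (overLabel_mem_CS hWF hnw),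
        Finset.mem_insert_of_mem (underLabel_mem_CS hWF hnw)⟩
    · rcases lt_or_ge n (i0 + M'.length) with hc2 | hc2
      · obtain ⟨j, hj, rfl⟩ : ∃ j, j < M'.length ∧ n = i0 + j :=
          ⟨n - i0, by omega, by omega⟩
        obtain ⟨ho, hu⟩ := hlab2 j hj
        rw [ho, hu]
        rcases C3 j hj with ⟨huz, i, hi, hoi⟩ | ⟨i, hi, ho1, hu1⟩
        · obtain ⟨hmo, hmu⟩ := hlabM i hi
          obtain ⟨hne1, hne2⟩ := hMne i hi
          have hiw : i0+1+i < w.length := by rw [hMl] at hi; omega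
          have hoprop : oLab (Equiv.swap m (m+1) * Q) M' j ≠ z
              ∧ oLab (Equiv.swap m (m+1) * Q) M' j ∈ CS p w
              ∧ r (oLab (Equiv.swap m (m+1) * Q) M' j) < r z := by
            rcases hoi with h | h
            · rw [h, ← hmo]
              exact ⟨hne1, overLabel_mem_CS hWF hiw,
                lt_of_le_of_ne (hmax _ (overLabel_mem_CS hWF hiw))
                  (fun he => hne1 (hinj he))⟩
            · rw [h, ← hmu]
              exact ⟨hne2, underLabel_mem_CS hWF hiw,
                lt_of_le_of_ne (hmax _ (underLabel_mem_CS hWF hiw))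
                  (fun he => hne2 (hinj he))⟩
          refine ⟨hoprop.1, ?_, Finset.mem_insert_of_mem hoprop.2.1, ?_⟩
          · rw [huz]
            exact hoprop.2.2
          · rw [huz]
            exact Finset.mem_insert_self _ _
        · obtain ⟨hmo, hmu⟩ := hlabM i hi
          have hiw : i0+1+i < w.length := by rw [hMl] at hi; omega
          rw [ho1, hu1, ← hmo, ← hmu]
          exact ⟨hall _ hiw, hdesc _ hiw,
            Finset.mem_insert_of_mem (overLabel_mem_CS hWF hiw),
            Finset.mem_insert_of_mem (underLabel_mem_CS hWF hiw)⟩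
      · obtain ⟨j, hj, rfl⟩ : ∃ j, j < B.length ∧ n = i0 + M'.length + j :=
          ⟨n - i0 - M'.length, by omega, by omega⟩
        obtain ⟨ho, hu⟩ := hlab3 j hj
        have hbw : b + j < w.length := by omega
        rw [ho, hu]
        exact ⟨hall _ hbw, hdesc _ hbw,
          Finset.mem_insert_of_mem (overLabel_mem_CS hWF hbw),
          Finset.mem_insert_of_mem (underLabel_mem_CS hWF hbw)⟩
  -- counting
  have hcnt : cnt (A ++ M' ++ B) z m < cnt w z m := by
    have e1 : cnt (A ++ M' ++ B) z m
        = (List.range i0).countP (fun n => decide (posW (A ++ M' ++ B) z n = m))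
          + ((List.range M'.length).countP
              (fun j => decide (posW (A ++ M' ++ B) z (i0 + j) = m))
            + (List.range (B.length + 1)).countP
              (fun j => decide (posW (A ++ M' ++ B) z (i0 + (M'.length + j)) = m))) := by
      unfold cnt
      rw [hw'len, show i0 + M'.length + B.length + 1 = i0 + (M'.length + (B.length+1)) by omega,
        List.range_add, List.countP_append, List.countP_map, List.range_add,
        List.countP_append, List.countP_map]
      rfl
    have e2 : (List.range i0).countP (fun n => decide (posW (A ++ M' ++ B) z n = m))
        = (List.range i0).countP (fun n => decide (posW w z n = m)) := by
      apply List.countP_congr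
      intro x hx
      have hxi : x < i0 := List.mem_range.mp hx
      rw [hpos1 x (by omega)]
    have e3 : (List.range M'.length).countP
        (fun j => decide (posW (A ++ M' ++ B) z (i0 + j) = m)) = 0 := by
      rw [List.countP_eq_zero]
      intro j hj
      have hjM : j < M'.length := List.mem_range.mp hj
      have h2 := hpos2 j (le_of_lt hjM)
      simp only [decide_eq_true_eq]
      omega
    have e4 : (List.range (B.length + 1)).countP
        (fun j => decide (posW (A ++ M' ++ B) z (i0 + (M'.length + j)) = m))
        = (List.range (B.length + 1)).countP (fun j => decide (posW w z (b + j) = m)) := by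
      apply List.countP_congr
      intro j hj
      have hjB : j < B.length + 1 := List.mem_range.mp hj
      rw [show i0 + (M'.length + j) = i0 + M'.length + j by omega, hpos3 j (by omega)]
    have e5 : cnt w z m
        = (List.range i0).countP (fun n => decide (posW w z n = m))
          + ((List.range (M.length + 2)).countP
              (fun jj => decide (posW w z (i0 + jj) = m))
            + (List.range (B.length + 1)).countP
              (fun j => decide (posW w z (i0 + (M.length + 2 + j)) = m))) := by
      unfold cnt
      rw [show w.length + 1 = i0 + ((M.length + 2) + (B.length+1)) by omega,
        List.range_add, List.countP_append, List.countP_map, List.range_add,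
        List.countP_append, List.countP_map]
      rfl
    have e7 : (List.range (B.length + 1)).countP
        (fun j => decide (posW w z (i0 + (M.length + 2 + j)) = m))
        = (List.range (B.length + 1)).countP
          (fun j => decide (posW w z (b + j) = m)) := by
      apply List.countP_congr
      intro j _
      rw [show i0 + (M.length + 2 + j) = b + j by omega]
    have e6 : (List.range (M.length + 2)).countP
        (fun jj => decide (posW w z (i0 + jj) = m)) = M.length + 1 := by
      rw [show M.length + 2 = 1 + (M.length + 1) by omega, List.range_add,
        List.countP_append, List.countP_map]
      have h1 : (List.range 1).countP (fun jj => decide (posW w z (i0 + jj) = m)) = 0 := by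
        rw [List.countP_eq_zero]
        intro j hj
        have : j = 0 := by simpa using hj
        subst this
        simp only [Nat.add_zero, decide_eq_true_eq]
        rw [hpi0]
        omega
      rw [h1]
      have h2 : (List.range (M.length + 1)).countP
          ((fun jj => decide (posW w z (i0 + jj) = m)) ∘ (fun x => 1 + x))
          = M.length + 1 := by
        have := List.countP_eq_length (l := List.range (M.length + 1))
          (p := (fun jj => decide (posW w z (i0 + jj) = m)) ∘ (fun x => 1 + x))
        rw [List.length_range] at this
        apply this.mpr
        intro t ht
        have htM : t < M.length + 1 := List.mem_range.mp ht
        simp only [Function.comp, decide_eq_true_eq]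
        rw [show i0 + (1 + t) = i0 + 1 + t by omega]
        exact hmid _ (by omega) (by omega)
      rw [h2]
      omega
    rw [e1, e2, e3, e4, e5, e6, e7]
    omega
  -- assemble
  refine ⟨A ++ M' ++ B, ?_, hsurgP, ?_, ?_, ?_, ?_, ?_, ?_, hcnt⟩
  · -- WF
    intro l hl
    rcases List.mem_append.mp hl with hl1 | hl1
    · rcases List.mem_append.mp hl1 with hl2 | hl2
      · exact hWF l (by rw [hA] at hl2; exact List.mem_of_mem_take hl2)
      · rw [hM'] at hl2
        obtain ⟨x, hx, hlx⟩ := List.mem_flatMap.mp hl2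
        have hxw := hWF x (hMsub x hx)
        rw [rep] at hlx
        by_cases hc : x.1 = m + 1
        · rw [if_pos hc] at hlx
          rw [hc] at hxw
          simp only [List.mem_cons, List.not_mem_nil, or_false] at hlx
          rcases hlx with rfl | rfl | rfl
          · show m + 1 + 2 ≤ p
            omega
          · show m + 2 ≤ p
            omega
          · show m + 1 + 2 ≤ p
            omega
        · rw [if_neg hc] at hlx
          simp only [List.mem_cons, List.not_mem_nil, or_false] at hlx
          rw [hlx]
          exact hxw
    · exact hWF l (by rw [hB] at hl1; exact List.mem_of_mem_drop hl1)
  · -- Desc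
    intro n hn
    exact (hlabels n hn).2.1
  · -- AllU
    intro n hn
    exact (hlabels n hn).1
  · -- max
    intro i hi
    obtain ⟨hip, n, hn, hlab⟩ := mem_CS.mp hi
    have hmem : i ∈ insert z (CS p w) := by
      rcases hlab with h | h
      · rw [← h]; exact (hlabels n hn).2.2.1
      · rw [← h]; exact (hlabels n hn).2.2.2
    rcases Finset.mem_insert.mp hmem with rfl | hmem2
    · exact le_refl _
    · exact hmax _ hmem2
  · -- toBraid
    intro h
    rw [← hsurgB]
    exact h
  · -- card
    apply Finset.card_le_card
    intro i hi
    rcases Finset.mem_insert.mp hi with rfl | hi2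
    · exact Finset.mem_insert_self _ _
    · obtain ⟨hip, n, hn, hlab⟩ := mem_CS.mp hi2
      rcases hlab with h | h
      · rw [← h]; exact (hlabels n hn).2.2.1
      · rw [← h]; exact (hlabels n hn).2.2.2
  · -- lower bound
    intro n hn
    rw [hw'len] at hn
    rcases le_or_gt n i0 with hc1 | hc1
    · rw [hpos1 n hc1]
      exact hlb n (by omega)
    · rcases le_or_gt n (i0 + M'.length) with hc2 | hc2
      · obtain ⟨j, hj, rfl⟩ : ∃ j, j ≤ M'.length ∧ n = i0 + j :=
          ⟨n - i0, by omega, by omega⟩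
        rcases hpos2 j hj with h | h <;> omega
      · obtain ⟨j, hj, rfl⟩ : ∃ j, j ≤ B.length ∧ n = i0 + M'.length + j :=
          ⟨n - i0 - M'.length, by omega, by omega⟩
        rw [hpos3 j hj]
        exact hlb _ (by omega)

end Retract
section Drivers

open List

lemma rot_cnt (w w' : Word) (z z' m t : ℕ) (ht : t ≤ w.length)
    (hlen : w'.length = w.length)
    (h1 : ∀ n, n ≤ w.length - t → posW w' z' n = posW w z (t+n))
    (h2 : ∀ j, j ≤ t → posW w' z' ((w.length - t) + j) = posW w z j)
    (hzz : posW w z w.length = posW w z 0)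
    (h0 : posW w z 0 = m) (htm : posW w z t ≠ m)
    (hlb : ∀ n, n ≤ w.length → m ≤ posW w z n) :
    (∀ n, n ≤ w'.length → m ≤ posW w' z' n) ∧ cnt w' z' m < cnt w z m := by
  constructor
  · intro n hn
    rw [hlen] at hn
    rcases le_or_gt n (w.length - t) with hc | hc
    · rw [h1 n hc]
      exact hlb _ (by omega)
    · obtain ⟨j, hj, rfl⟩ : ∃ j, j ≤ t ∧ n = (w.length - t) + j :=
        ⟨n - (w.length - t), by omega, by omega⟩
      rw [h2 j hj]
      exact hlb _ (by omega)
  · have e1 : cnt w' z' m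
        = (List.range (w.length - t)).countP (fun n => decide (posW w' z' n = m))
          + (List.range (t+1)).countP
            (fun j => decide (posW w' z' ((w.length - t) + j) = m)) := by
      unfold cnt
      rw [hlen, show w.length + 1 = (w.length - t) + (t + 1) by omega,
        List.range_add, List.countP_append, List.countP_map]
      rfl
    have e2 : (List.range (w.length - t)).countP (fun n => decide (posW w' z' n = m))
        = (List.range (w.length - t)).countP (fun n => decide (posW w z (t+n) = m)) := by
      apply List.countP_congr
      intro n hn
      have := List.mem_range.mp hn
      rw [h1 n (by omega)]
    have e3 : (List.range (t+1)).countP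
        (fun j => decide (posW w' z' ((w.length - t) + j) = m))
        = (List.range (t+1)).countP (fun j => decide (posW w z j = m)) := by
      apply List.countP_congr
      intro j hj
      have := List.mem_range.mp hj
      rw [h2 j (by omega)]
    have e4 : cnt w z m
        = (List.range t).countP (fun j => decide (posW w z j = m))
          + (List.range ((w.length - t) + 1)).countP
            (fun n => decide (posW w z (t+n) = m)) := by
      unfold cnt
      rw [show w.length + 1 = t + ((w.length - t) + 1) by omega,
        List.range_add, List.countP_append, List.countP_map]
      rfl
    have e5 : (List.range ((w.length - t) + 1)).countP
        (fun n => decide (posW w z (t+n) = m))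
        = (List.range (w.length - t)).countP (fun n => decide (posW w z (t+n) = m)) + 1 := by
      rw [List.range_succ, List.countP_append]
      congr 1
      have : posW w z (t + (w.length - t)) = m := by
        rw [show t + (w.length - t) = w.length by omega, hzz, h0]
      simp [this]
    have e6 : (List.range (t+1)).countP (fun j => decide (posW w z j = m))
        = (List.range t).countP (fun j => decide (posW w z j = m)) := by
      rw [List.range_succ, List.countP_append]
      have : ([t].countP fun j => decide (posW w z j = m)) = 0 := by
        simp [htm]
      rw [this, Nat.add_zero]
    rw [e1, e2, e3, e4, e5, e6]
    omega

lemma nonconst {p : ℕ} {w : Word} {z m : ℕ} (hWF : WF p w) (hz : z ∈ CS p w) :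
    ∃ t, t ≤ w.length ∧ posW w z t ≠ m := by
  obtain ⟨hzp, n, hn, hlab⟩ := mem_CS.mp hz
  have hne : posW w z n ≠ posW w z (n+1) := by
    have hstep := posW_succ w z hn
    have hpos : posW w z n = (w.getD n (0,true)).1 ∨ posW w z n = (w.getD n (0,true)).1 + 1 := by
      rcases hlab with h | h
      · rw [over_iff_pos] at h
        rw [h]
        split
        · exact Or.inl rfl
        · exact Or.inr rfl
      · rw [under_iff_pos] at h
        rw [h]
        split
        · exact Or.inr rfl
        · exact Or.inl rfl
    rw [hstep, letterPerm, swap_at]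
    rcases hpos with h | h
    · rw [if_pos h]; omega
    · rw [if_neg (by omega), if_pos h]; omega
  rcases eq_or_ne (posW w z n) m with h | h
  · exact ⟨n+1, by omega, by rw [← h]; exact fun he => hne he.symm⟩
  · exact ⟨n, by omega, h⟩

lemma lemA (p : ℕ) : ∀ (d : ℕ), ∀ (c : ℕ), ∀ (w : Word) (r : ℕ → ℕ) (z m : ℕ),
    WF p w → permOfWord w = 1 → Function.Injective r → Desc w r → AllU w z → z < p →
    (∀ i ∈ CS p w, r i ≤ r z) →
    (∀ n, n ≤ w.length → m ≤ posW w z n) →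
    (∃ n, n ≤ w.length ∧ posW w z n = m) →
    p - m ≤ d → cnt w z m ≤ c →
    ∃ (w' : Word) (r' : ℕ → ℕ),
      WF p w' ∧ permOfWord w' = 1 ∧ Function.Injective r' ∧ Desc w' r' ∧
      (toBraid p w' = 1 → toBraid p w = 1) ∧
      (CS p w').card < (insert z (CS p w)).card := by
  intro d
  induction d with
  | zero =>
    intro c w r z m hWF hpure hinj hdesc hall hzp hmax hlb hat hd hc
    exfalso
    have h1 := hlb 0 (by omega)
    rw [posW_zero] at h1
    omega
  | succ d ihd =>
    intro c
    induction c with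
    | zero =>
      intro w r z m hWF hpure hinj hdesc hall hzp hmax hlb hat hd hc
      exfalso
      obtain ⟨n, hn, hnm⟩ := hat
      have : 0 < cnt w z m := by
        apply List.countP_pos_iff.mpr
        exact ⟨n, List.mem_range.mpr (by omega), by simp [hnm]⟩
      omega
    | succ c ihc =>
      intro w r z m hWF hpure hinj hdesc hall hzp hmax hlb hat hd hc
      by_cases hz : z ∈ CS p w
      · -- a reduction step is possible; shared continuation:
        have hcont : ∀ (w' : Word) (r' : ℕ → ℕ) (z' : ℕ),
            WF p w' → permOfWord w' = 1 → Function.Injective r' → Desc w' r' →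
            AllU w' z' → z' < p → (∀ i ∈ CS p w', r' i ≤ r' z') →
            (toBraid p w' = 1 → toBraid p w = 1) →
            (insert z' (CS p w')).card ≤ (insert z (CS p w)).card →
            (∀ n, n ≤ w'.length → m ≤ posW w' z' n) →
            cnt w' z' m < cnt w z m →
            ∃ (w'' : Word) (r'' : ℕ → ℕ),
              WF p w'' ∧ permOfWord w'' = 1 ∧ Function.Injective r'' ∧ Desc w'' r'' ∧
              (toBraid p w'' = 1 → toBraid p w = 1) ∧
              (CS p w'').card < (insert z (CS p w)).card := by
          intro w' r' z' hWF' hpure' hinj' hdesc' hall' hzp' hmax' himpl hcard hlb' hcnt'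
          obtain ⟨n₀, hn₀, hmin⟩ := Finset.exists_min_image
            (Finset.range (w'.length+1)) (posW w' z') ⟨0, by simp⟩
          have hn₀le : n₀ ≤ w'.length := by
            have := Finset.mem_range.mp hn₀; omega
          have hm'lb : ∀ n, n ≤ w'.length → posW w' z' n₀ ≤ posW w' z' n :=
            fun n hn => hmin n (Finset.mem_range.mpr (by omega))
          have hm'at : ∃ n, n ≤ w'.length ∧ posW w' z' n = posW w' z' n₀ :=
            ⟨n₀, hn₀le, rfl⟩
          have hmm' : m ≤ posW w' z' n₀ := hlb' n₀ hn₀le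
          rcases eq_or_lt_of_le hmm' with heq | hlt
          · obtain ⟨w'', r'', G1, G2, G3, G4, Gimpl, Gcard⟩ :=
              ihc w' r' z' m hWF' hpure' hinj' hdesc' hall' hzp' hmax' hlb'
                (by rw [← heq] at hm'at; exact hm'at) hd (by omega)
            exact ⟨w'', r'', G1, G2, G3, G4, fun h => himpl (Gimpl h),
              lt_of_lt_of_le Gcard hcard⟩
          · have hm'p : posW w' z' n₀ < p := posW_lt hWF' hzp' n₀
            obtain ⟨w'', r'', G1, G2, G3, G4, Gimpl, Gcard⟩ :=
              ihd (cnt w' z' (posW w' z' n₀)) w' r' z' (posW w' z' n₀)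
                hWF' hpure' hinj' hdesc' hall' hzp' hmax' hm'lb hm'at
                (by omega) (le_refl _)
            exact ⟨w'', r'', G1, G2, G3, G4, fun h => himpl (Gimpl h),
              lt_of_lt_of_le Gcard hcard⟩
        obtain ⟨t, ht, htm⟩ := nonconst (m := m) hWF hz
        by_cases h0 : posW w z 0 = m
        · obtain ⟨w', r', z', hWF', hpure', hinj', hdesc', hall', hzp', hmax', himpl,
            hcard, hlen', hp1, hp2⟩ :=
            rotate_step p w r z t hWF hpure hinj hdesc hall hzp hmax ht
          obtain ⟨hlb', hcnt'⟩ := rot_cnt w w' z z' m t ht hlen' hp1 hp2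
            (by rw [posW_last w z hpure, posW_zero]) h0 htm hlb
          exact hcont w' r' z' hWF' hpure' hinj' hdesc' hall' hzp' hmax' himpl hcard hlb' hcnt'
        · obtain ⟨w', hWF', hpure', hdesc', hall', hmax', himpl, hcard, hlb', hcnt'⟩ :=
            retract_step p w r z m hWF hpure hinj hdesc hall hzp hmax hlb hat h0
          exact hcont w' r z hWF' hpure' hinj hdesc' hall' hzp hmax' himpl hcard hlb' hcnt'
      · refine ⟨w, r, hWF, hpure, hinj, hdesc, fun h => h, ?_⟩
        rw [Finset.card_insert_of_notMem hz]
        omega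

lemma mainAux (p : ℕ) : ∀ (k : ℕ) (w : Word) (r : ℕ → ℕ),
    WF p w → permOfWord w = 1 → Function.Injective r → Desc w r →
    (CS p w).card ≤ k → toBraid p w = 1 := by
  intro k
  induction k with
  | zero =>
    intro w r hWF hpure hinj hdesc hcard
    rcases w with _ | ⟨l, tl⟩
    · rfl
    · exfalso
      have h0 : overLabel (l :: tl) 0 ∈ CS p (l :: tl) :=
        overLabel_mem_CS hWF (by simp)
      have := Finset.card_pos.mpr ⟨_, h0⟩
      omega
  | succ k ih =>
    intro w r hWF hpure hinj hdesc hcard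
    by_cases hwe : w = []
    · rw [hwe]; rfl
    · have hne : (CS p w).Nonempty :=
        ⟨_, overLabel_mem_CS hWF (List.length_pos_iff.mpr hwe)⟩
      obtain ⟨z, hzmem, hzmax⟩ := Finset.exists_max_image (CS p w) r hne
      have hzp : z < p := (mem_CS.mp hzmem).1
      have hall : AllU w z := by
        intro n hn hcontra
        have h1 := hdesc n hn
        have h2 := hzmax _ (underLabel_mem_CS hWF hn)
        rw [hcontra] at h1
        omega
      obtain ⟨n₀, hn₀, hmin⟩ := Finset.exists_min_image
        (Finset.range (w.length+1)) (posW w z) ⟨0, by simp⟩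
      have hn₀le : n₀ ≤ w.length := by
        have := Finset.mem_range.mp hn₀; omega
      obtain ⟨w', r', G1, G2, G3, G4, Gimpl, Gcard⟩ :=
        lemA p p (cnt w z (posW w z n₀)) w r z (posW w z n₀) hWF hpure hinj hdesc hall hzp
          hzmax (fun n hn => hmin n (Finset.mem_range.mpr (by omega)))
          ⟨n₀, hn₀le, rfl⟩
          (by omega) (le_refl _)
      apply Gimpl
      apply ih w' r' G1 G2 G3 G4
      have hins : (insert z (CS p w)).card = (CS p w).card := by
        rw [Finset.insert_eq_self.mpr hzmem]
      omega

end Drivers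
/-- A pure braid diagram with warping degree zero is equivalent to the trivial braid. -/
theorem pure_braid_warpingDegree_zero (p : ℕ) (w : Word) (hw : WF p w)
    (hpure : permOfWord w = 1) (hd : warpingDegree w = 0) :
    toBraid p w = 1 := by
  have hne : {m | ∃ r : ℕ → ℕ, Function.Injective r ∧ warpCount w r = m}.Nonempty :=
    ⟨warpCount w id, id, Function.injective_id, rfl⟩
  have h0 : (0 : ℕ) ∈ {m | ∃ r : ℕ → ℕ, Function.Injective r ∧ warpCount w r = m} := by
    rcases Nat.sInf_eq_zero.mp hd with h | h
    · exact h
    · exact absurd (h ▸ hne) (by simp)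
  obtain ⟨r, hinj, hwc⟩ := h0
  have hdesc : Desc w r := by
    intro n hn
    have hfil : (List.range w.length).filter
        (fun n => decide (r (underLabel w n) < r (overLabel w n))) = [] :=
      List.length_eq_zero_iff.mp hwc
    have h1 := List.filter_eq_nil_iff.mp hfil n (List.mem_range.mpr hn)
    simp only [decide_eq_true_eq] at h1
    have h2 : r (overLabel w n) ≠ r (underLabel w n) :=
      fun he => over_ne_under n (hinj he)
    omega
  exact mainAux p ((CS p w).card) w r hw hpure hinj hdesc (le_refl _)
end Weaving
end

section
/- For any braid diagram B with c(B) crossings, u(B) ≤ c(B)/2, where u(B) is the minimum number of crossing changes needed so that the closure of the resulting braid is a trivial link. -/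
namespace Weaving

/-! ### Auxiliary material for the proof -/

/-- The mirror of a word: all crossing signs flipped. -/
def mir (w : Word) : Word := w.map fun l => (l.1, !l.2)

lemma mir_WF {p : ℕ} {w : Word} (h : WF p w) : WF p (mir w) := by
  intro l hl
  simp only [mir, List.mem_map] at hl
  obtain ⟨x, hx, rfl⟩ := hl
  exact h x hx

lemma mir_append (w₁ w₂ : Word) : mir (w₁ ++ w₂) = mir w₁ ++ mir w₂ :=
  List.map_append

/-- Every relation of the braid group holds in the braid group. -/
lemma rel_holds (p : ℕ) {r : FreeGroup (Fin (p - 1))} (hr : r ∈ braidRels p) :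
    PresentedGroup.mk (braidRels p) r = 1 := by
  have : r ∈ Subgroup.normalClosure (braidRels p) := Subgroup.subset_normalClosure hr
  exact (QuotientGroup.eq_one_iff r).2 this

lemma mir_rels (p : ℕ) :
    ∀ r ∈ braidRels p,
      FreeGroup.lift (fun i : Fin (p - 1) => (PresentedGroup.of (rels := braidRels p) i)⁻¹) r
        = 1 := by
  intro r hr
  have h1 := rel_holds p hr
  rcases hr with ⟨i, j, _, rfl⟩ | ⟨i, j, _, rfl⟩ <;>
    simp only [map_mul, map_inv, FreeGroup.lift_apply_of] at h1 ⊢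
  · have h2 : PresentedGroup.of (rels := braidRels p) i * PresentedGroup.of j *
        PresentedGroup.of i *
        (PresentedGroup.of j * PresentedGroup.of i * PresentedGroup.of j)⁻¹ = 1 := h1
    rw [mul_inv_eq_one] at h2 ⊢
    have h3 := congrArg Inv.inv h2
    simpa [mul_inv_rev, mul_assoc] using h3
  · have h2 : PresentedGroup.of (rels := braidRels p) i * PresentedGroup.of j *
        (PresentedGroup.of j * PresentedGroup.of i)⁻¹ = 1 := h1
    rw [mul_inv_eq_one] at h2 ⊢
    have h3 := congrArg Inv.inv h2
    have h4 : (PresentedGroup.of (rels := braidRels p) j)⁻¹ *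
        (PresentedGroup.of i)⁻¹ = (PresentedGroup.of i)⁻¹ * (PresentedGroup.of j)⁻¹ := by
      simpa [mul_inv_rev] using h3
    exact h4.symm

/-- The mirror automorphism of the braid group, sending each generator to its inverse. -/
noncomputable def mirHom (p : ℕ) : BraidGroup p →* BraidGroup p :=
  PresentedGroup.toGroup (mir_rels p)

lemma mirHom_of (p : ℕ) (i : Fin (p - 1)) :
    mirHom p (PresentedGroup.of i) = (PresentedGroup.of i)⁻¹ :=
  PresentedGroup.toGroup.of _

lemma mirHom_letter (p : ℕ) (l : Letter) :
    mirHom p (letterToBraid p l) = letterToBraid p (l.1, !l.2) := by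
  unfold letterToBraid
  by_cases h : l.1 < p - 1
  · rw [dif_pos h, dif_pos h]
    cases hb : l.2 <;> simp [mirHom_of]
  · rw [dif_neg h, dif_neg h, map_one]

lemma mirHom_toBraid (p : ℕ) (w : Word) :
    mirHom p (toBraid p w) = toBraid p (mir w) := by
  unfold toBraid mir
  rw [map_list_prod, List.map_map, List.map_map]
  congr 1
  refine List.map_congr_left fun l _ => ?_
  exact mirHom_letter p l

lemma markovStep_mir {x y : ℕ × Word} (h : MarkovStep x y) :
    MarkovStep (x.1, mir x.2) (y.1, mir y.2) := by
  cases h with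
  | braid p w w' h1 h2 h3 =>
      exact MarkovStep.braid p (mir w) (mir w') (mir_WF h1) (mir_WF h2)
        (by rw [← mirHom_toBraid, ← mirHom_toBraid, h3])
  | conj p w₁ w₂ h1 =>
      have e1 : mir (w₁ ++ w₂) = mir w₁ ++ mir w₂ := mir_append _ _
      have e2 : mir (w₂ ++ w₁) = mir w₂ ++ mir w₁ := mir_append _ _
      simp only [e1, e2]
      exact MarkovStep.conj p (mir w₁) (mir w₂) (by rw [← e1]; exact mir_WF h1)
  | stab p w b h1 h2 =>
      have e : mir (w ++ [(p - 1, b)]) = mir w ++ [(p - 1, !b)] := by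
        simp [mir]
      simp only [e]
      exact MarkovStep.stab p (mir w) (!b) (mir_WF h1) h2

lemma markovEquiv_mir {x y : ℕ × Word} (h : MarkovEquiv x y) :
    MarkovEquiv (x.1, mir x.2) (y.1, mir y.2) := by
  induction h with
  | rel a b hab => exact Relation.EqvGen.rel _ _ (markovStep_mir hab)
  | refl a => exact Relation.EqvGen.refl _
  | symm a b _ ih => exact Relation.EqvGen.symm _ _ ih
  | trans a b c _ _ ih1 ih2 => exact Relation.EqvGen.trans _ _ _ ih1 ih2

lemma isTrivialClosure_mir {p : ℕ} {w : Word} (h : IsTrivialClosure p w) :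
    IsTrivialClosure p (mir w) := by
  obtain ⟨r, hr⟩ := h
  refine ⟨r, ?_⟩
  have := markovEquiv_mir hr
  simpa [mir] using this

lemma flipAt_compl (w : Word) (S : Finset ℕ) :
    flipAt w (Finset.range w.length \ S) = mir (flipAt w S) := by
  unfold flipAt mir
  rw [List.map_map]
  refine List.map_congr_left fun nl hnl => ?_
  have hlt : nl.2 < w.length := by
    have := List.mem_zipIdx_iff_getElem?.1 hnl
    have := List.getElem?_eq_some_iff.1 this
    exact this.1
  by_cases hn : nl.2 ∈ S
  · simp [Function.comp, hn, hlt]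
  · simp [Function.comp, hn, hlt]

/-- For any braid diagram `B`, `u(B) ≤ c(B)/2`. -/
theorem braidUnknottingNumber_le_half (p : ℕ) (w : Word) (hw : WF p w) :
    2 * braidUnknottingNumber p w ≤ w.length := by
  rw [braidUnknottingNumber]
  set U : Set ℕ := { m | ∃ S : Finset ℕ, S ⊆ Finset.range w.length ∧ S.card = m ∧
    IsTrivialClosure p (flipAt w S) } with hU
  rcases Set.eq_empty_or_nonempty U with he | hne
  · rw [he, Nat.sInf_empty]
    omega
  · obtain ⟨S, hsub, hcard, htriv⟩ := Nat.sInf_mem hne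
    have h1 : sInf U = S.card := hcard.symm
    have htriv' : IsTrivialClosure p (flipAt w (Finset.range w.length \ S)) := by
      rw [flipAt_compl]
      exact isTrivialClosure_mir htriv
    have h2 : sInf U ≤ (Finset.range w.length \ S).card :=
      Nat.sInf_le ⟨_, Finset.sdiff_subset, rfl, htriv'⟩
    have h3 : (Finset.range w.length \ S).card = w.length - S.card := by
      rw [Finset.card_sdiff_of_subset hsub, Finset.card_range]
    have h4 : S.card ≤ w.length := by
      simpa using Finset.card_le_card hsub
    omega

end Weaving
end
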